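/- arXiv:1610.06833 — 4 statements merged into one kernel-verified Lean document; each statement's English description precedes it below -/
import Mathlib

section
/- Suppose Y = ∇φ(U) + Db(U)ᵀX, i.e. Y = ∇Φ_X(U) where Φ_x(t) := φ(t) + b(t)·x, and suppose that (i) for m-almost every x the map u ↦ φ(u) + b(u)·x is convex and smooth on [0,1]^d, and (ii) Law(U) = μ and 𝔼(X|U) = 0. Then U solves the primal problem (P): for every random vector V with Law(V) = μ and 𝔼(X|V) = 0 one has 𝔼(V·Y) ≤ 𝔼(U·Y). -/
open MeasureTheory ProbabilityTheory Set
open scoped RealInnerProductSpace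

noncomputable section

theorem aux_integrable_of_bound {Ωs : Type*} [MeasurableSpace Ωs] {P : Measure Ωs}
    [IsFiniteMeasure P] {f : Ωs → ℝ} (hf : AEStronglyMeasurable f P) (C : ℝ)
    (hC : ∀ᵐ ω ∂P, ‖f ω‖ ≤ C) : Integrable f P :=
  ⟨hf, HasFiniteIntegral.of_bounded hC⟩

theorem aux_grad_ineq {E : Type*} [NormedAddCommGroup E] [InnerProductSpace ℝ E] [CompleteSpace E]
    {s : Set E} {f : E → ℝ} {g u v : E}
    (hf : ConvexOn ℝ s f) (hu : u ∈ s) (hv : v ∈ s) (hg : HasGradientAt f g u) :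
    ⟪g, v - u⟫ ≤ f v - f u := by
  set γ : ℝ → E := fun t => (AffineMap.lineMap u v : ℝ →ᵃ[ℝ] E) t with hγ
  have hγeq : γ = fun t : ℝ => t • (v - u) + u := by
    funext t; simp [hγ, AffineMap.lineMap_apply]
  have hγ0 : γ 0 = u := by simp [hγeq]
  have hγ1 : γ 1 = v := by simp [hγeq]
  have hγd : HasDerivAt γ (v - u) 0 := by
    rw [hγeq]
    have h1 : HasDerivAt (fun t : ℝ => t • (v - u)) ((1:ℝ) • (v - u)) 0 :=
      (hasDerivAt_id (0:ℝ)).smul_const (v - u)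
    simpa using h1.add_const u
  have hfd : HasFDerivAt f (InnerProductSpace.toDual ℝ E g) (γ 0) := by
    rw [hγ0]; exact hg.hasFDerivAt
  have hcomp : HasDerivAt (f ∘ γ) ⟪g, v - u⟫ 0 := by
    have := hfd.comp_hasDerivAt 0 hγd
    simpa [InnerProductSpace.toDual_apply_apply] using this
  have hconv : ConvexOn ℝ (Icc (0:ℝ) 1) (f ∘ γ) := by
    refine (hf.comp_affineMap (AffineMap.lineMap u v)).subset ?_ (convex_Icc 0 1)
    intro t ht
    exact mem_preimage.2 (hf.1.lineMap_mem hu hv ht)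
  have hslope := hconv.le_slope_of_hasDerivAt (by simp : (0:ℝ) ∈ Icc (0:ℝ) 1)
    (by simp : (1:ℝ) ∈ Icc (0:ℝ) 1) zero_lt_one hcomp
  have heq : slope (f ∘ γ) 0 1 = f v - f u := by
    simp [slope_def_field, Function.comp, hγ0, hγ1]
  linarith [hslope, heq.le, heq.ge]

theorem aux_mi {Ωs : Type*} {m : MeasurableSpace Ωs} [m0 : MeasurableSpace Ωs]
    {P : Measure Ωs} [IsProbabilityMeasure P]
    {E : Type*} [NormedAddCommGroup E] [InnerProductSpace ℝ E] [CompleteSpace E]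
    (hm : m ≤ m0)
    {X : Ωs → E} (hXint : Integrable X P)
    (hcond : P[X|m] =ᵐ[P] 0)
    {h : Ωs → ℝ} (hh : StronglyMeasurable[m] h) {C : ℝ} (hhC : ∀ᵐ ω ∂P, ‖h ω‖ ≤ C)
    (ℓ : E →L[ℝ] ℝ) :
    ∫ ω, h ω * ℓ (X ω) ∂P = 0 := by
  haveI : SigmaFinite (P.trim hm) := inferInstance
  have hℓX : Integrable (fun ω => ℓ (X ω)) P := ℓ.integrable_comp hXint
  have hprod : Integrable (fun ω => h ω * ℓ (X ω)) P :=
    hℓX.bdd_mul ((hh.mono hm).aestronglyMeasurable) hhC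
  have hg_eq : ∀ s : Set Ωs, MeasurableSet[m] s → P s < ⊤ →
      ∫ x in s, (0:ℝ) ∂P = ∫ x in s, ℓ (X x) ∂P := by
    intro s hs _
    have h1 : ∫ x in s, ℓ (X x) ∂P = ℓ (∫ x in s, X x ∂P) :=
      ℓ.integral_comp_comm hXint.integrableOn
    have h2 : ∫ x in s, X x ∂P = ∫ x in s, (P[X|m]) x ∂P :=
      (setIntegral_condExp hm hXint hs).symm
    have h3 : ∫ x in s, (P[X|m]) x ∂P = 0 := by
      rw [integral_congr_ae (ae_restrict_of_ae hcond)]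
      simp
    rw [h1, h2, h3]
    simp
  have hcond' : (fun _ : Ωs => (0:ℝ)) =ᵐ[P] P[fun ω => ℓ (X ω)|m] := by
    refine ae_eq_condExp_of_forall_setIntegral_eq hm hℓX
      (fun s _ _ => (integrable_zero Ωs ℝ P).integrableOn) hg_eq ?_
    exact StronglyMeasurable.aestronglyMeasurable (@stronglyMeasurable_zero Ωs ℝ m _ _)
  have hmul : P[fun ω => h ω * ℓ (X ω)|m] =ᵐ[P] fun ω => h ω * (P[fun ω => ℓ (X ω)|m]) ω := by
    have := condExp_mul_of_stronglyMeasurable_left (μ := P) hh hprod hℓX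
    exact this
  calc ∫ ω, h ω * ℓ (X ω) ∂P
      = ∫ ω, (P[fun ω => h ω * ℓ (X ω)|m]) ω ∂P := (integral_condExp hm).symm
    _ = ∫ ω, h ω * (P[fun ω => ℓ (X ω)|m]) ω ∂P := integral_congr_ae hmul
    _ = ∫ ω, h ω * 0 ∂P := by
        refine integral_congr_ae ?_
        filter_upwards [hcond'] with ω hω
        rw [← hω]
    _ = 0 := by simp

theorem aux_hyperplane {d : ℕ} (i : Fin d) (c : ℝ) :
    (volume : Measure (EuclideanSpace ℝ (Fin d))) {u | u i = c} = 0 := by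
  set L : EuclideanSpace ℝ (Fin d) →ₗ[ℝ] ℝ :=
    { toFun := fun u => u i, map_add' := fun x y => rfl, map_smul' := fun a x => rfl } with hL
  set p : EuclideanSpace ℝ (Fin d) := EuclideanSpace.single i c with hp
  have hpi : p i = c := by simp [hp]
  set A : AffineSubspace ℝ (EuclideanSpace ℝ (Fin d)) := AffineSubspace.mk' p (LinearMap.ker L)
    with hA
  have hset : {u : EuclideanSpace ℝ (Fin d) | u i = c} = (A : Set (EuclideanSpace ℝ (Fin d))) := by
    ext u
    simp only [hA, SetLike.mem_coe, AffineSubspace.mem_mk', vsub_eq_sub,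
      LinearMap.mem_ker, mem_setOf_eq]
    have : L (u - p) = u i - c := by
      simp [hL, hpi]
      rw [← hpi]; rfl
    rw [this, sub_eq_zero]
  have hne : A ≠ ⊤ := by
    intro htop
    have hmem : p + EuclideanSpace.single i 1 ∈ A := by rw [htop]; trivial
    rw [hA, AffineSubspace.mem_mk', vsub_eq_sub] at hmem
    have : L (p + EuclideanSpace.single i 1 - p) = 1 := by
      simp [hL]
      show (EuclideanSpace.single i (1:ℝ)) i = 1
      simp
    rw [LinearMap.mem_ker, this] at hmem
    exact one_ne_zero hmem
  rw [hset]
  exact Measure.addHaar_affineSubspace volume A hne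

theorem aux_cube_compact {d : ℕ} :
    IsCompact {u : EuclideanSpace ℝ (Fin d) | ∀ i, u i ∈ Icc (0:ℝ) 1} := by
  have h : {u : EuclideanSpace ℝ (Fin d) | ∀ i, u i ∈ Icc (0:ℝ) 1}
      = (EuclideanSpace.equiv (Fin d) ℝ).toHomeomorph ⁻¹' (univ.pi fun _ => Icc (0:ℝ) 1) := by
    ext u; simp only [mem_preimage, Set.mem_univ_pi, ContinuousLinearEquiv.coe_toHomeomorph]
    exact Iff.rfl
  rw [h, Homeomorph.isCompact_preimage]
  exact isCompact_univ_pi fun _ => isCompact_Icc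

theorem aux_open_box {d : ℕ} :
    IsOpen {u : EuclideanSpace ℝ (Fin d) | ∀ i, u i ∈ Ioo (0:ℝ) 1} := by
  have h : {u : EuclideanSpace ℝ (Fin d) | ∀ i, u i ∈ Ioo (0:ℝ) 1}
      = (EuclideanSpace.equiv (Fin d) ℝ).toHomeomorph ⁻¹' (univ.pi fun _ => Ioo (0:ℝ) 1) := by
    ext u; simp only [mem_preimage, Set.mem_univ_pi, ContinuousLinearEquiv.coe_toHomeomorph]
    exact Iff.rfl
  rw [h]
  exact (isOpen_set_pi finite_univ fun _ _ => isOpen_Ioo).preimage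
    (EuclideanSpace.equiv (Fin d) ℝ).toHomeomorph.continuous

theorem aux_boundary_null {d : ℕ} :
    (volume : Measure (EuclideanSpace ℝ (Fin d)))
      ({u | ∀ i, u i ∈ Icc (0:ℝ) 1} \ {u | ∀ i, u i ∈ Ioo (0:ℝ) 1}) = 0 := by
  refine measure_mono_null (fun u hu => ?_)
    (measure_iUnion_null (s := fun i : Fin d => {u : EuclideanSpace ℝ (Fin d) | u i = 0}
      ∪ {u | u i = 1}) fun i => measure_union_null (aux_hyperplane i 0) (aux_hyperplane i 1))
  obtain ⟨h1, h2⟩ := hu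
  simp only [mem_setOf_eq, not_forall] at h2
  obtain ⟨i, hi⟩ := h2
  refine mem_iUnion.2 ⟨i, ?_⟩
  have hic := h1 i
  rw [mem_Ioo] at hi
  push_neg at hi
  rcases lt_or_ge (0:ℝ) (u i) with h | h
  · exact Or.inr (le_antisymm hic.2 (hi h))
  · exact Or.inl (le_antisymm h hic.1)

/-- If `Y = ∇Φ_X(U)` with `Φ_x(u) = φ(u) + ⟪b(u), x⟫` convex and smooth in `u`
for `m`-a.e. `x`, `U` uniformly distributed on the cube `[0,1]^d` and `X` mean-independent of
`U`, then `U` solves the primal problem (P): it maximizes `𝔼(V·Y)` among uniformly distributed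
`V` such that `X` is mean-independent of `V`. -/
theorem vqr_sufficiency_of_specification
    {Ωs : Type*} [MeasurableSpace Ωs] (P : Measure Ωs) [IsProbabilityMeasure P]
    {N d : ℕ}
    (X : Ωs → EuclideanSpace ℝ (Fin N)) (Y : Ωs → EuclideanSpace ℝ (Fin d))
    (U : Ωs → EuclideanSpace ℝ (Fin d))
    (hX : Measurable X) (hY : Measurable Y) (hU : Measurable U)
    (hXbdd : ∃ C : ℝ, ∀ ω, ‖X ω‖ ≤ C) (hYbdd : ∃ C : ℝ, ∀ ω, ‖Y ω‖ ≤ C)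
    (hXcentered : ∫ ω, X ω ∂P = 0)
    -- the cube [0,1]^d and the uniform measure on it
    (cube : Set (EuclideanSpace ℝ (Fin d)))
    (hcube : cube = {u : EuclideanSpace ℝ (Fin d) | ∀ i, u i ∈ Icc (0:ℝ) 1})
    -- data of the affine-in-x candidate quantile map
    (φ : EuclideanSpace ℝ (Fin d) → ℝ)
    (b : EuclideanSpace ℝ (Fin d) → EuclideanSpace ℝ (Fin N))
    -- (ii) Law(U) = μ = uniform on the cube, and 𝔼(X|U) = 0
    (hLawU : Measure.map U P = volume.restrict cube)
    (hMeanIndep : P[X | MeasurableSpace.comap U inferInstance] =ᵐ[P] 0)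
    -- (i) for m-a.e. x, u ↦ φ(u) + ⟪b(u), x⟫ is convex and smooth on the cube
    (hConvSmooth : ∀ᵐ x ∂(Measure.map X P),
      ConvexOn ℝ cube (fun u => φ u + ⟪b u, x⟫) ∧
      ContDiffOn ℝ (⊤ : ℕ∞) (fun u => φ u + ⟪b u, x⟫) cube)
    -- Y = ∇Φ_X(U) almost surely
    (hRep : ∀ᵐ ω ∂P, Y ω = gradient (fun u => φ u + ⟪b u, X ω⟫) (U ω)) :
    ∀ V : Ωs → EuclideanSpace ℝ (Fin d), Measurable V →
      Measure.map V P = volume.restrict cube →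
      P[X | MeasurableSpace.comap V inferInstance] =ᵐ[P] 0 →
      ∫ ω, ⟪V ω, Y ω⟫ ∂P ≤ ∫ ω, ⟪U ω, Y ω⟫ ∂P := by
  intro V hV hLawV hMIV
  obtain ⟨CX, hCX⟩ := hXbdd
  obtain ⟨CY, hCY⟩ := hYbdd
  have hXint : Integrable X P :=
    ⟨hX.aestronglyMeasurable, HasFiniteIntegral.of_bounded (ae_of_all _ hCX)⟩
  haveI : IsProbabilityMeasure (Measure.map X P) := Measure.isProbabilityMeasure_map hX.aemeasurable
  -- cube facts
  have cube_cpt : IsCompact cube := by rw [hcube]; exact aux_cube_compact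
  have cube_meas : MeasurableSet cube := cube_cpt.isClosed.measurableSet
  set Io : Set (EuclideanSpace ℝ (Fin d)) := {u | ∀ i, u i ∈ Ioo (0:ℝ) 1} with hIo
  have hIoOpen : IsOpen Io := aux_open_box
  have hIoSub : Io ⊆ cube := by
    rw [hcube]; intro u hu i; exact Ioo_subset_Icc_self (hu i)
  have hbnull : volume (cube \ Io) = 0 := by rw [hcube]; exact aux_boundary_null
  obtain ⟨Mc, hMc⟩ := cube_cpt.exists_bound_of_continuousOn continuousOn_id
  -- the good set S
  set F : EuclideanSpace ℝ (Fin d) → EuclideanSpace ℝ (Fin N) → ℝ :=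
    fun u x => φ u + ⟪b u, x⟫ with hF
  set S : Set (EuclideanSpace ℝ (Fin N)) :=
    {x | ConvexOn ℝ cube (fun u => F u x) ∧ ContDiffOn ℝ (⊤ : ℕ∞) (fun u => F u x) cube} with hSdef
  have hS : ∀ᵐ x ∂(Measure.map X P), x ∈ S := hConvSmooth
  have hXS : ∀ᵐ ω ∂P, X ω ∈ S := ae_of_ae_map hX.aemeasurable hS
  haveI : (ae (Measure.map X P)).NeBot := ae_neBot.2 (IsProbabilityMeasure.ne_zero _)
  obtain ⟨x₀, hx₀⟩ : ∃ x, x ∈ S := hS.exists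
  have hContF : ∀ z ∈ S, ContinuousOn (fun u => F u z) cube := fun z hz => hz.2.continuousOn
  -- linear algebra: a basis of the span of S - x₀
  obtain ⟨t, hts, htspan, htli⟩ :=
    exists_linearIndependent ℝ ((fun z => z - x₀) '' S)
  have htfin : t.Finite := htli.setFinite
  haveI := htfin.fintype
  set Wt : Submodule ℝ (EuclideanSpace ℝ (Fin N)) := Submodule.span ℝ t with hWt
  have hrange : Submodule.span ℝ (Set.range ((↑) : t → EuclideanSpace ℝ (Fin N))) = Wt := by
    rw [Subtype.range_coe]
  set B : Module.Basis t ℝ Wt := (Module.Basis.span htli).map (LinearEquiv.ofEq _ _ hrange) with hB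
  have hBi : ∀ i : t, ((B i : Wt) : EuclideanSpace ℝ (Fin N)) = (i : EuclideanSpace ℝ (Fin N)) := by
    intro i
    rw [hB, Module.Basis.map_apply]
    have : ((LinearEquiv.ofEq _ _ hrange) (Module.Basis.span htli i) : EuclideanSpace ℝ (Fin N))
        = ((Module.Basis.span htli i : _) : EuclideanSpace ℝ (Fin N)) := rfl
    rw [this, Module.Basis.span_apply]
  set ℓf : t → (EuclideanSpace ℝ (Fin N) →L[ℝ] ℝ) := fun i =>
    (LinearMap.toContinuousLinearMap (B.coord i)).comp
      (Wt.orthogonalProjectionOnto : EuclideanSpace ℝ (Fin N) →L[ℝ] Wt) with hℓf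
  have hrepr : ∀ w, w ∈ Wt →
      (∑ i : t, ℓf i w • (i : EuclideanSpace ℝ (Fin N))) = w := by
    intro w hw
    have hproj : Wt.orthogonalProjectionOnto w = ⟨w, hw⟩ :=
      Submodule.orthogonalProjectionOnto_mem_subspace_eq_self (⟨w, hw⟩ : Wt)
    have hval : ∀ i : t, ℓf i w = B.repr ⟨w, hw⟩ i := by
      intro i
      simp only [hℓf, ContinuousLinearMap.comp_apply, LinearMap.coe_toContinuousLinearMap']
      rw [hproj, Module.Basis.coord_apply]
    have hsum := B.sum_repr ⟨w, hw⟩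
    have hcoe := congrArg (Subtype.val) hsum
    push_cast at hcoe
    calc (∑ i : t, ℓf i w • (i : EuclideanSpace ℝ (Fin N)))
        = ∑ i : t, B.repr ⟨w, hw⟩ i • ((B i : Wt) : EuclideanSpace ℝ (Fin N)) := by
          refine Finset.sum_congr rfl fun i _ => ?_
          rw [hval i, hBi i]
      _ = w := hcoe
  -- choose preimages in S
  have hy' : ∀ i : t, ∃ z, z ∈ S ∧ z - x₀ = (i : EuclideanSpace ℝ (Fin N)) := by
    intro i
    obtain ⟨z, hz, hze⟩ := hts i.2
    exact ⟨z, hz, hze⟩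
  choose y hyS hyx using hy'
  -- the jointly measurable representative
  set H : EuclideanSpace ℝ (Fin d) → EuclideanSpace ℝ (Fin N) → ℝ := fun u x =>
    F u x₀ + ∑ i : t, ℓf i (x - x₀) * (F u (y i) - F u x₀) with hH
  have hFH : ∀ u x, x - x₀ ∈ Wt → F u x = H u x := by
    intro u x hx
    have hsum := hrepr _ hx
    have h1 : F u x - F u x₀ = ⟪b u, x - x₀⟫ := by
      simp [hF, inner_sub_right]
    have h2 : ⟪b u, x - x₀⟫ = ∑ i : t, ℓf i (x - x₀) * (F u (y i) - F u x₀) := by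
      calc ⟪b u, x - x₀⟫
          = ⟪b u, ∑ i : t, ℓf i (x - x₀) • (i : EuclideanSpace ℝ (Fin N))⟫ := by
            conv_lhs => rw [← hsum]
        _ = ∑ i : t, ℓf i (x - x₀) * ⟪b u, (i : EuclideanSpace ℝ (Fin N))⟫ := by
            rw [inner_sum]
            exact Finset.sum_congr rfl fun i _ => real_inner_smul_right _ _ _
        _ = ∑ i : t, ℓf i (x - x₀) * (F u (y i) - F u x₀) := by
            refine Finset.sum_congr rfl fun i _ => ?_
            congr 1
            rw [← hyx i]
            simp [hF, inner_sub_right]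
    rw [hH]
    simp only []
    rw [← h2, ← h1]
    ring
  have hXW : ∀ᵐ ω ∂P, X ω - x₀ ∈ Wt := by
    filter_upwards [hXS] with ω hω
    rw [htspan]
    exact Submodule.subset_span (mem_image_of_mem _ hω)
  -- the constant K
  set μc : Measure (EuclideanSpace ℝ (Fin d)) := volume.restrict cube with hμc
  set K : ℝ := (∫ u, F u x₀ ∂μc)
    + ∑ i : t, (- ℓf i x₀) * ∫ u, (F u (y i) - F u x₀) ∂μc with hK
  -- the key claim
  have base : ∀ (W : Ωs → EuclideanSpace ℝ (Fin d)), Measurable W →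
      Measure.map W P = volume.restrict cube →
      ∀ g : EuclideanSpace ℝ (Fin d) → ℝ, ContinuousOn g cube →
      ∃ g' : EuclideanSpace ℝ (Fin d) → ℝ, Measurable g' ∧
        (∀ᵐ ω ∂P, g' (W ω) = g (W ω)) ∧ (∃ M, ∀ᵐ ω ∂P, ‖g' (W ω)‖ ≤ M)
        ∧ ∫ ω, g' (W ω) ∂P = ∫ u, g u ∂μc := by
    intro W hW hLawW g hg
    have hWcube : ∀ᵐ ω ∂P, W ω ∈ cube := by
      refine ae_of_ae_map hW.aemeasurable ?_
      rw [hLawW]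
      exact ae_restrict_mem cube_meas
    have hgae : AEMeasurable g (volume.restrict cube) := hg.aemeasurable cube_meas
    have heq : ∀ᵐ ω ∂P, (hgae.mk g) (W ω) = g (W ω) := by
      refine ae_of_ae_map (p := fun x => hgae.mk g x = g x) hW.aemeasurable ?_
      rw [hLawW]
      exact hgae.ae_eq_mk.symm
    refine ⟨hgae.mk g, hgae.measurable_mk, heq, ?_, ?_⟩
    · obtain ⟨M, hM⟩ := cube_cpt.exists_bound_of_continuousOn hg
      refine ⟨M, ?_⟩
      filter_upwards [hWcube, heq] with ω h1 h2
      rw [h2]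
      exact hM _ h1
    · rw [← integral_map hW.aemeasurable hgae.measurable_mk.aestronglyMeasurable, hLawW, hμc]
      exact integral_congr_ae hgae.ae_eq_mk.symm
  have key : ∀ (W : Ωs → EuclideanSpace ℝ (Fin d)), Measurable W →
      Measure.map W P = volume.restrict cube →
      P[X | MeasurableSpace.comap W inferInstance] =ᵐ[P] 0 →
      Integrable (fun ω => H (W ω) (X ω)) P ∧ ∫ ω, H (W ω) (X ω) ∂P = K := by
    intro W hW hLawW hMIW
    have hmW : MeasurableSpace.comap W inferInstance ≤ _ := hW.comap_le
    have hWmble : @Measurable Ωs _ (MeasurableSpace.comap W inferInstance) _ W :=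
      Measurable.of_comap_le le_rfl
    obtain ⟨g₀, hg₀m, hg₀e, ⟨M₀, hM₀⟩, hg₀i⟩ :=
      base W hW hLawW (fun u => F u x₀) (hContF x₀ hx₀)
    have hgi : ∀ i : t, ∃ g' : EuclideanSpace ℝ (Fin d) → ℝ, Measurable g' ∧
        (∀ᵐ ω ∂P, g' (W ω) = F (W ω) (y i) - F (W ω) x₀) ∧
        (∃ M, ∀ᵐ ω ∂P, ‖g' (W ω)‖ ≤ M) ∧
        ∫ ω, g' (W ω) ∂P = ∫ u, (F u (y i) - F u x₀) ∂μc :=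
      fun i => base W hW hLawW _ ((hContF _ (hyS i)).sub (hContF x₀ hx₀))
    choose g hgm hge hgbd hgint using hgi
    choose M hMi using hgbd
    have hg0int : Integrable (fun ω => g₀ (W ω)) P :=
      aux_integrable_of_bound ((hg₀m.comp hW)).aestronglyMeasurable M₀ hM₀
    set H' : Ωs → ℝ := fun ω => g₀ (W ω) + ∑ i : t, ℓf i (X ω - x₀) * g i (W ω) with hH'
    have hae : ∀ᵐ ω ∂P, H (W ω) (X ω) = H' ω := by
      have hallg : ∀ᵐ ω ∂P, ∀ i : t, g i (W ω) = F (W ω) (y i) - F (W ω) x₀ :=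
        (ae_all_iff).2 hge
      filter_upwards [hg₀e, hallg] with ω h0 hg
      simp only [hH, hH']
      rw [h0]
      congr 1
      exact Finset.sum_congr rfl fun i _ => by rw [hg i]
    have hsummandint : ∀ i : t, Integrable (fun ω => ℓf i (X ω - x₀) * g i (W ω)) P := by
      intro i
      have hXx0m : Measurable fun ω => X ω - x₀ := hX.sub measurable_const
      refine aux_integrable_of_bound
        ((((ℓf i).continuous.measurable.comp hXx0m).mul ((hgm i).comp hW)).aestronglyMeasurable)
        ((‖ℓf i‖ * (|CX| + ‖x₀‖)) * M i) ?_
      filter_upwards [hMi i] with ω hb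
      calc ‖ℓf i (X ω - x₀) * g i (W ω)‖
          = ‖ℓf i (X ω - x₀)‖ * ‖g i (W ω)‖ := norm_mul _ _
        _ ≤ (‖ℓf i‖ * (|CX| + ‖x₀‖)) * M i := by
            refine mul_le_mul ?_ hb (norm_nonneg _) (by positivity)
            refine le_trans ((ℓf i).le_opNorm _) ?_
            have hx : ‖X ω - x₀‖ ≤ |CX| + ‖x₀‖ :=
              le_trans (norm_sub_le _ _)
                (add_le_add (le_trans (hCX ω) (le_abs_self CX)) le_rfl)
            exact mul_le_mul_of_nonneg_left hx (norm_nonneg _)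
    have hH'int : Integrable H' P :=
      hg0int.add (integrable_finset_sum _ fun i _ => hsummandint i)
    have hHint : Integrable (fun ω => H (W ω) (X ω)) P := hH'int.congr (hae.mono fun _ h => h.symm)
    have hint0 : ∀ i : t, ∫ ω, (g i (W ω)) * ℓf i (X ω) ∂P = 0 := by
      intro i
      have hsm : StronglyMeasurable[MeasurableSpace.comap W inferInstance]
          (fun ω => g i (W ω)) := ((hgm i).comp hWmble).stronglyMeasurable
      exact aux_mi hmW hXint hMIW hsm (hMi i) (ℓf i)
    have hsummand : ∀ i : t, ∫ ω, ℓf i (X ω - x₀) * g i (W ω) ∂P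
        = (- ℓf i x₀) * ∫ u, (F u (y i) - F u x₀) ∂μc := by
      intro i
      have hgiW : Integrable (fun ω => g i (W ω)) P :=
        aux_integrable_of_bound ((hgm i).comp hW).aestronglyMeasurable (M i) (hMi i)
      have hgℓX : Integrable (fun ω => g i (W ω) * ℓf i (X ω)) P :=
        ((ℓf i).integrable_comp hXint).bdd_mul
          ((hgm i).comp hW).aestronglyMeasurable (hMi i)
      have heqi : (fun ω => ℓf i (X ω - x₀) * g i (W ω))
          = fun ω => g i (W ω) * ℓf i (X ω) - ℓf i x₀ * g i (W ω) := by
        funext ω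
        rw [map_sub]
        ring
      rw [heqi, integral_sub hgℓX (hgiW.const_mul _), hint0 i, integral_const_mul, hgint i]
      ring
    have hfinal : ∫ ω, H' ω ∂P = K := by
      rw [hH', integral_add hg0int (integrable_finset_sum _ fun i _ => hsummandint i),
        integral_finset_sum _ (fun i _ => hsummandint i), hg₀i, hK]
      congr 1
      exact Finset.sum_congr rfl fun i _ => hsummand i
    exact ⟨hHint, by rw [integral_congr_ae hae, hfinal]⟩
  -- a.e. membership facts
  have hVcube : ∀ᵐ ω ∂P, V ω ∈ cube := by
    refine ae_of_ae_map (p := fun x => x ∈ cube) hV.aemeasurable ?_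
    rw [hLawV]
    exact ae_restrict_mem cube_meas
  have hUIo : ∀ᵐ ω ∂P, U ω ∈ Io := by
    refine ae_of_ae_map (p := fun x => x ∈ Io) hU.aemeasurable ?_
    rw [hLawU]
    have hnull : (volume.restrict cube) Ioᶜ = 0 := by
      rw [Measure.restrict_apply hIoOpen.isClosed_compl.measurableSet]
      exact measure_mono_null (fun x hx => mem_diff_of_mem hx.2 hx.1) hbnull
    exact mem_ae_iff.2 (by simpa using hnull)
  -- pointwise inequality
  have hptwise : ∀ᵐ ω ∂P, ⟪V ω, Y ω⟫ - ⟪U ω, Y ω⟫ ≤ H (V ω) (X ω) - H (U ω) (X ω) := by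
    filter_upwards [hXS, hXW, hRep, hUIo, hVcube] with ω hS' hW' hRep' hU' hV'
    have hUc : U ω ∈ cube := hIoSub hU'
    set f : EuclideanSpace ℝ (Fin d) → ℝ := fun u => F u (X ω) with hfd
    have hconv : ConvexOn ℝ cube f := hS'.1
    have hnhds : cube ∈ nhds (U ω) := mem_nhds_iff.2 ⟨Io, hIoSub, hIoOpen, hU'⟩
    have hdiff : DifferentiableAt ℝ f (U ω) :=
      (hS'.2.contDiffAt hnhds).differentiableAt (by simp)
    have hgrad : HasGradientAt f (gradient f (U ω)) (U ω) := hdiff.hasGradientAt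
    have hineq := aux_grad_ineq hconv hUc hV' hgrad
    have hYeq : Y ω = gradient f (U ω) := hRep'
    calc ⟪V ω, Y ω⟫ - ⟪U ω, Y ω⟫ = ⟪gradient f (U ω), V ω - U ω⟫ := by
          rw [hYeq, ← inner_sub_left, real_inner_comm]
      _ ≤ f (V ω) - f (U ω) := hineq
      _ = H (V ω) (X ω) - H (U ω) (X ω) := by
          show F (V ω) (X ω) - F (U ω) (X ω) = _
          rw [hFH _ _ hW', hFH _ _ hW']
  -- integrability of the inner products
  have hinner_int : ∀ (W : Ωs → EuclideanSpace ℝ (Fin d)), Measurable W →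
      (∀ᵐ ω ∂P, W ω ∈ cube) → Integrable (fun ω => ⟪W ω, Y ω⟫) P := by
    intro W hW hWc
    refine aux_integrable_of_bound (hW.inner hY).aestronglyMeasurable (Mc * |CY|) ?_
    filter_upwards [hWc] with ω hc
    calc ‖⟪W ω, Y ω⟫‖ ≤ ‖W ω‖ * ‖Y ω‖ := norm_inner_le_norm _ _
      _ ≤ Mc * |CY| := by
          refine mul_le_mul (hMc _ hc) (le_trans (hCY ω) (le_abs_self CY)) (norm_nonneg _) ?_
          exact le_trans (norm_nonneg (W ω)) (hMc _ hc)
  obtain ⟨hintV, hIV⟩ := key V hV hLawV hMIV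
  obtain ⟨hintU, hIU⟩ := key U hU hLawU hMeanIndep
  have hiV := hinner_int V hV hVcube
  have hiU := hinner_int U hU (hUIo.mono fun ω h => hIoSub h)
  have hfin : ∫ ω, ⟪V ω, Y ω⟫ ∂P - ∫ ω, ⟪U ω, Y ω⟫ ∂P ≤ 0 := by
    calc ∫ ω, ⟪V ω, Y ω⟫ ∂P - ∫ ω, ⟪U ω, Y ω⟫ ∂P
        = ∫ ω, (⟪V ω, Y ω⟫ - ⟪U ω, Y ω⟫) ∂P := (integral_sub hiV hiU).symm
      _ ≤ ∫ ω, (H (V ω) (X ω) - H (U ω) (X ω)) ∂P :=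
          integral_mono_ae (hiV.sub hiU) (hintV.sub hintU) hptwise
      _ = ∫ ω, H (V ω) (X ω) ∂P - ∫ ω, H (U ω) (X ω) ∂P := integral_sub hintV hintU
      _ = 0 := by rw [hIV, hIU]; ring
  linarith
end
end

section
/- The infimum of the dual problem (D) taken over continuous triples (ψ,φ,b), with ψ ∈ C(supp(ν)), φ ∈ C([0,1]^d), b ∈ C([0,1]^d,ℝ^N) satisfying the pointwise constraint, coincides with the infimum taken over integrable triples: over φ ∈ L¹((0,1)^d), b ∈ L¹((0,1)^d;ℝ^N) and ψ(x,y) := sup_{t∈[0,1]^d}{t·y − φ(t) − b(t)·x} satisfying the same constraint. In particular the value of (D) equals inf over (φ,b) of ∫ sup_{t∈[0,1]^d}{t·y − φ(t) − b(t)·x} ν(dx,dy) + ∫_{[0,1]^d} φ dμ. -/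
open MeasureTheory ProbabilityTheory Set
open scoped RealInnerProductSpace

noncomputable section

/-- The support of a measure: points all of whose neighborhoods have positive measure. -/
def measSupport {E : Type*} [TopologicalSpace E] [MeasurableSpace E] (m : Measure E) :
    Set E := {x | ∀ s ∈ nhds x, 0 < m s}

/-!
A continuous feasible triple `(ψ, φ, b)` only improves when `ψ` is replaced by
`sup_t {t·y - φ(t) - b(t)·x}`, which is continuous as a supremum over the compact cube.
Conversely, given an integrable feasible pair, approximate `b` in `L¹` by a continuous `b'` and
replace `φ` by `φ'(t) = sup_{(x,y) ∈ supp ν} {t·y - ψ(x,y) - b'(t)·x}`. Since `supp ν` is compact,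
`(t, β) ↦ sup_{(x,y)} {t·y - ψ(x,y) - β·x}` is Lipschitz, so `φ'` is continuous and
`∫ φ' ≤ ∫ φ + K ‖b - b'‖_{L¹}`. Hence the two infima agree (when the values are unbounded below,
both sides are `0` by the `sInf` convention).
-/

open scoped NNReal

theorem measSupport_eq_support {E : Type*} [TopologicalSpace E] [MeasurableSpace E]
    (m : Measure E) : measSupport m = m.support := by
  ext x
  exact (Measure.mem_support_iff_forall x).symm

theorem MeasureTheory.Measure.isCompact_support_of_ae_mem {X : Type*} [TopologicalSpace X]
    [T2Space X] [MeasurableSpace X] {m : Measure X} {K : Set X} (hK : IsCompact K)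
    (hmK : ∀ᵐ x ∂m, x ∈ K) : IsCompact m.support :=
  hK.of_isClosed_subset isClosed_support (support_subset_of_isClosed hK.isClosed hmK)

theorem Real.sInf_eq_of_forall_exists_le_add {A B : Set ℝ}
    (hAB : ∀ a ∈ A, ∃ b ∈ B, b ≤ a) (hBA : ∀ b ∈ B, ∀ ε > 0, ∃ a ∈ A, a ≤ b + ε) :
    sInf A = sInf B := by
  rcases B.eq_empty_or_nonempty with rfl | hB
  · obtain rfl : A = ∅ := eq_empty_of_forall_notMem fun a ha => by simpa using hAB a ha
    rfl
  have hA : A.Nonempty := by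
    obtain ⟨b, hb⟩ := hB
    obtain ⟨a, ha, -⟩ := hBA b hb 1 one_pos
    exact ⟨a, ha⟩
  by_cases hBbdd : BddBelow B
  · have hAbdd : BddBelow A := by
      obtain ⟨m, hm⟩ := hBbdd
      refine ⟨m, fun a ha => ?_⟩
      obtain ⟨b, hb, hba⟩ := hAB a ha
      exact (hm hb).trans hba
    refine le_antisymm (le_csInf hB fun b hb => le_of_forall_pos_le_add fun ε hε => ?_)
      (le_csInf hA fun a ha => ?_)
    · obtain ⟨a, ha, hab⟩ := hBA b hb ε hε
      exact (csInf_le hAbdd ha).trans hab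
    · obtain ⟨b, hb, hba⟩ := hAB a ha
      exact (csInf_le hBbdd hb).trans hba
  · have hAbdd : ¬BddBelow A := by
      rintro ⟨m, hm⟩
      refine hBbdd ⟨m - 1, fun b hb => ?_⟩
      obtain ⟨a, ha, hab⟩ := hBA b hb 1 one_pos
      linarith [hm ha]
    rw [Real.sInf_of_not_bddBelow hBbdd, Real.sInf_of_not_bddBelow hAbdd]

theorem LipschitzWith.sSup_image {X ι : Type*} [PseudoMetricSpace X] {I : Set ι}
    (hI : I.Nonempty) {f : ι → X → ℝ} {K : ℝ≥0} (hf : ∀ i ∈ I, LipschitzWith K (f i))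
    (hbdd : ∀ x, BddAbove ((f · x) '' I)) : LipschitzWith K fun x => sSup ((f · x) '' I) :=
  LipschitzWith.of_le_add_mul K fun x y => csSup_le (hI.image _) <| by
    rintro _ ⟨i, hi, rfl⟩
    calc f i x ≤ f i y + K * dist x y := (hf i hi).le_add_mul x y
      _ ≤ sSup ((f · y) '' I) + K * dist x y := by
        gcongr
        exact le_csSup (hbdd y) (mem_image_of_mem _ hi)

theorem integrable_of_continuousOn_of_ae_mem {X G : Type*} [TopologicalSpace X] [T2Space X]
    [MeasurableSpace X] [OpensMeasurableSpace X] [NormedAddCommGroup G] {m : Measure X}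
    [IsFiniteMeasureOnCompacts m] {K : Set X} (hK : IsCompact K) (hmK : ∀ᵐ x ∂m, x ∈ K)
    {f : X → G} (hf : ContinuousOn f K) : Integrable f m := by
  rw [← Measure.restrict_eq_self_of_ae_mem hmK]
  exact hf.integrableOn_compact hK

theorem EuclideanSpace.isCompact_setOf_forall_mem {ι : Type*} [Fintype ι] {s : ι → Set ℝ}
    (hs : ∀ i, IsCompact (s i)) : IsCompact {u : EuclideanSpace ℝ ι | ∀ i, u i ∈ s i} := by
  convert (EuclideanSpace.equiv ι ℝ).toHomeomorph.isCompact_preimage.2 (isCompact_univ_pi hs)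
  ext u
  simp

section Duality

variable {E F : Type*} [NormedAddCommGroup E] [InnerProductSpace ℝ E]
  [NormedAddCommGroup F] [InnerProductSpace ℝ F]

theorem lipschitzWith_inner_sub_inner (a : E) (b : F) (c : ℝ) :
    LipschitzWith (‖a‖₊ + ‖b‖₊) fun p : E × F => ⟪p.1, a⟫ - c - ⟪p.2, b⟫ := by
  refine LipschitzWith.of_le_add_mul _ fun p q => ?_
  have h₁ : ⟪p.1, a⟫ - ⟪q.1, a⟫ ≤ ‖a‖ * dist p q := by
    rw [← inner_sub_left, mul_comm]
    exact (real_inner_le_norm _ _).trans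
      (mul_le_mul_of_nonneg_right ((norm_fst_le (p - q)).trans_eq (dist_eq_norm p q).symm)
        (norm_nonneg a))
  have h₂ : ⟪q.2, b⟫ - ⟪p.2, b⟫ ≤ ‖b‖ * dist p q := by
    rw [← inner_sub_left, mul_comm]
    exact (real_inner_le_norm _ _).trans
      (mul_le_mul_of_nonneg_right ((norm_snd_le (q - p)).trans_eq (dist_eq_norm' p q).symm)
        (norm_nonneg b))
  push_cast
  linarith

def DualFeasible (S : Set (F × E)) (T : Set E) (ψ : F × E → ℝ) (φ : E → ℝ) (b : E → F) :
    Prop :=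
  ∀ z ∈ S, ∀ t ∈ T, ψ z + φ t + ⟪b t, z.1⟫ ≥ ⟪t, z.2⟫

def conjPsi (T : Set E) (φ : E → ℝ) (b : E → F) (z : F × E) : ℝ :=
  sSup ((fun t => ⟪t, z.2⟫ - φ t - ⟪b t, z.1⟫) '' T)

/-- The least value `φ t` compatible with `ψ` once `b t = β`, as a function of `p = (t, β)`. -/
def conjPhi (S : Set (F × E)) (ψ : F × E → ℝ) (p : E × F) : ℝ :=
  sSup ((fun z => ⟪p.1, z.2⟫ - ψ z - ⟪p.2, z.1⟫) '' S)

variable {S : Set (F × E)} {T : Set E} {ψ : F × E → ℝ} {φ : E → ℝ} {b : E → F}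

theorem continuous_conjPsi (hT : IsCompact T) (hφ : ContinuousOn φ T) (hb : ContinuousOn b T) :
    Continuous (conjPsi T φ b) := by
  have : CompactSpace T := isCompact_iff_compactSpace.mp hT
  have hφ' : Continuous fun t : T => φ t := continuousOn_iff_continuous_domRestrict.mp hφ
  have hb' : Continuous fun t : T => b t := continuousOn_iff_continuous_domRestrict.mp hb
  have key := isCompact_univ.continuous_sSup
    (f := fun (z : F × E) (t : T) => ⟪(t : E), z.2⟫ - φ t - ⟪b t, z.1⟫)
    ((((continuous_subtype_val.comp continuous_snd).inner continuous_fst.snd).sub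
      (hφ'.comp continuous_snd)).sub ((hb'.comp continuous_snd).inner continuous_fst.fst))
  convert key using 2 with z
  rw [conjPsi, image_univ, image_eq_range]

theorem dualFeasible_conjPsi (S : Set (F × E)) (hT : IsCompact T) (hφ : ContinuousOn φ T)
    (hb : ContinuousOn b T) : DualFeasible S T (conjPsi T φ b) φ b := by
  intro z _ t ht
  have hbdd : BddAbove ((fun t => ⟪t, z.2⟫ - φ t - ⟪b t, z.1⟫) '' T) :=
    hT.bddAbove_image (((continuousOn_id.inner continuousOn_const).sub hφ).sub
      (hb.inner continuousOn_const))
  have := le_csSup hbdd (mem_image_of_mem _ ht)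
  rw [← conjPsi] at this
  linarith

theorem DualFeasible.conjPsi_le (h : DualFeasible S T ψ φ b) (hT : T.Nonempty) {z : F × E}
    (hz : z ∈ S) : conjPsi T φ b z ≤ ψ z :=
  csSup_le (hT.image _) <| by
    rintro _ ⟨t, ht, rfl⟩
    linarith [h z hz t ht]

theorem DualFeasible.bddAbove_conjPhi (h : DualFeasible S T ψ φ b) (hS : IsCompact S)
    {t₀ : E} (ht₀ : t₀ ∈ T) (p : E × F) :
    BddAbove ((fun z => ⟪p.1, z.2⟫ - ψ z - ⟪p.2, z.1⟫) '' S) := by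
  obtain ⟨C, hC⟩ := hS.bddAbove_image (f := fun z : F × E =>
    ⟪p.1, z.2⟫ - ⟪t₀, z.2⟫ + φ t₀ + ⟪b t₀, z.1⟫ - ⟪p.2, z.1⟫)
    (by fun_prop : Continuous _).continuousOn
  refine ⟨C, ?_⟩
  rintro _ ⟨z, hz, rfl⟩
  linarith [h z hz t₀ ht₀, hC (mem_image_of_mem _ hz)]

theorem DualFeasible.exists_lipschitzWith_conjPhi (h : DualFeasible S T ψ φ b)
    (hS : IsCompact S) (hSne : S.Nonempty) {t₀ : E} (ht₀ : t₀ ∈ T) :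
    ∃ K, LipschitzWith K (conjPhi S ψ) := by
  obtain ⟨K, hK⟩ := hS.bddAbove_image
    (by fun_prop : Continuous fun z : F × E => ‖z.2‖₊ + ‖z.1‖₊).continuousOn
  exact ⟨K, LipschitzWith.sSup_image hSne
    (fun z hz => (lipschitzWith_inner_sub_inner z.2 z.1 (ψ z)).weaken
      (hK (mem_image_of_mem _ hz)))
    (h.bddAbove_conjPhi hS ht₀)⟩

theorem DualFeasible.conjPhi_le (h : DualFeasible S T ψ φ b) (hS : S.Nonempty) {t : E}
    (ht : t ∈ T) : conjPhi S ψ (t, b t) ≤ φ t :=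
  csSup_le (hS.image _) <| by
    rintro _ ⟨z, hz, rfl⟩
    linarith [h z hz t ht]

theorem DualFeasible.conjPhi_le_add (h : DualFeasible S T ψ φ b) (hS : S.Nonempty) {K : ℝ≥0}
    (hK : LipschitzWith K (conjPhi S ψ)) {t : E} (ht : t ∈ T) (β : F) :
    conjPhi S ψ (t, β) ≤ φ t + K * ‖b t - β‖ :=
  calc conjPhi S ψ (t, β) ≤ conjPhi S ψ (t, b t) + K * dist (t, β) (t, b t) :=
        hK.le_add_mul _ _
    _ = conjPhi S ψ (t, b t) + K * ‖b t - β‖ := by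
        rw [Prod.dist_eq, dist_self, dist_eq_norm', max_eq_right (norm_nonneg _)]
    _ ≤ φ t + K * ‖b t - β‖ := by grw [h.conjPhi_le hS ht]

theorem dualFeasible_conjPhi
    (hbdd : ∀ p : E × F, BddAbove ((fun z => ⟪p.1, z.2⟫ - ψ z - ⟪p.2, z.1⟫) '' S))
    (b : E → F) : DualFeasible S T ψ (fun t => conjPhi S ψ (t, b t)) b := by
  intro z hz t _
  have := le_csSup (hbdd (t, b t)) (mem_image_of_mem _ hz)
  rw [← conjPhi] at this
  dsimp only at this ⊢
  linarith

end Duality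

section Values

variable {E F : Type*} [NormedAddCommGroup E] [InnerProductSpace ℝ E] [MeasurableSpace E]
  [NormedAddCommGroup F] [InnerProductSpace ℝ F] [MeasurableSpace F]

def continuousDualValues (ν : Measure (F × E)) (μ : Measure E) (S : Set (F × E)) (T : Set E) :
    Set ℝ :=
  {r | ∃ (ψ : F × E → ℝ) (φ : E → ℝ) (b : E → F), ContinuousOn ψ S ∧ ContinuousOn φ T ∧
    ContinuousOn b T ∧ DualFeasible S T ψ φ b ∧ r = ∫ z, ψ z ∂ν + ∫ t, φ t ∂μ}

def integrableDualValues (ν : Measure (F × E)) (μ : Measure E) (S : Set (F × E)) (T : Set E) :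
    Set ℝ :=
  {r | ∃ (φ : E → ℝ) (b : E → F), Integrable φ μ ∧ Integrable b μ ∧
    Integrable (conjPsi T φ b) ν ∧ DualFeasible S T (conjPsi T φ b) φ b ∧
    r = ∫ z, conjPsi T φ b z ∂ν + ∫ t, φ t ∂μ}

variable [BorelSpace E] [SecondCountableTopology E] [BorelSpace F]
  {ν : Measure (F × E)} [IsFiniteMeasure ν] {μ : Measure E} [IsFiniteMeasure μ]
  {S : Set (F × E)} {T : Set E} {ψ : F × E → ℝ} {φ : E → ℝ} {b : E → F}

theorem DualFeasible.integral_conjPsi_le (h : DualFeasible S T ψ φ b) (hS : IsCompact S)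
    (hνS : ∀ᵐ z ∂ν, z ∈ S) (hT : IsCompact T) (hTne : T.Nonempty) (hψ : Integrable ψ ν)
    (hφ : ContinuousOn φ T) (hb : ContinuousOn b T) :
    ∫ z, conjPsi T φ b z ∂ν ≤ ∫ z, ψ z ∂ν :=
  integral_mono_ae
    (integrable_of_continuousOn_of_ae_mem hS hνS (continuous_conjPsi hT hφ hb).continuousOn) hψ
    (hνS.mono fun _ hz => h.conjPsi_le hTne hz)

theorem exists_mem_integrableDualValues_le (hS : IsCompact S) (hνS : ∀ᵐ z ∂ν, z ∈ S)
    (hT : IsCompact T) (hTne : T.Nonempty) (hμT : ∀ᵐ t ∂μ, t ∈ T) {r : ℝ}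
    (hr : r ∈ continuousDualValues ν μ S T) : ∃ r' ∈ integrableDualValues ν μ S T, r' ≤ r := by
  obtain ⟨ψ, φ, b, hψ, hφ, hb, h, rfl⟩ := hr
  refine ⟨_, ⟨φ, b, integrable_of_continuousOn_of_ae_mem hT hμT hφ,
    integrable_of_continuousOn_of_ae_mem hT hμT hb,
    integrable_of_continuousOn_of_ae_mem hS hνS (continuous_conjPsi hT hφ hb).continuousOn,
    dualFeasible_conjPsi S hT hφ hb, rfl⟩, ?_⟩
  have hψint := integrable_of_continuousOn_of_ae_mem hS hνS hψ
  grw [h.integral_conjPsi_le hS hνS hT hTne hψint hφ hb]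

theorem DualFeasible.exists_mem_continuousDualValues_le_add (h : DualFeasible S T ψ φ b)
    (hS : IsCompact S) (hSne : S.Nonempty) (hνS : ∀ᵐ z ∂ν, z ∈ S) (hT : IsCompact T)
    (hTne : T.Nonempty) (hμT : ∀ᵐ t ∂μ, t ∈ T) (hψ : Integrable ψ ν) (hφ : Integrable φ μ)
    (hb : Integrable b μ) {ε : ℝ} (hε : 0 < ε) :
    ∃ r ∈ continuousDualValues ν μ S T, r ≤ ∫ z, ψ z ∂ν + ∫ t, φ t ∂μ + ε := by
  obtain ⟨t₀, ht₀⟩ := hTne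
  obtain ⟨K, hK⟩ := h.exists_lipschitzWith_conjPhi hS hSne ht₀
  obtain ⟨b', hbb', hb'⟩ := hb.exists_boundedContinuous_integral_sub_le
    (div_pos hε (by positivity : (0 : ℝ) < K + 1))
  set φ' : E → ℝ := fun t => conjPhi S ψ (t, b' t)
  have hφ' : Continuous φ' := hK.continuous.comp (continuous_id.prodMk b'.continuous)
  have h' : DualFeasible S T ψ φ' b' := dualFeasible_conjPhi (h.bddAbove_conjPhi hS ht₀) b'
  have hbb'int : Integrable (fun t => ‖b t - b' t‖) μ := (hb.sub hb').norm
  have hφ'φ : ∫ t, φ' t ∂μ ≤ ∫ t, φ t ∂μ + ε :=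
    calc ∫ t, φ' t ∂μ ≤ ∫ t, (φ t + K * ‖b t - b' t‖) ∂μ :=
          integral_mono_ae (integrable_of_continuousOn_of_ae_mem hT hμT hφ'.continuousOn)
            (hφ.add (hbb'int.const_mul _)) (hμT.mono fun _ ht => h.conjPhi_le_add hSne hK ht _)
      _ = ∫ t, φ t ∂μ + K * ∫ t, ‖b t - b' t‖ ∂μ := by
          rw [integral_add hφ (hbb'int.const_mul _), integral_const_mul]
      _ ≤ ∫ t, φ t ∂μ + (K + 1) * (ε / (K + 1)) := by gcongr; linarith
      _ = ∫ t, φ t ∂μ + ε := by rw [mul_div_cancel₀ _ (by positivity)]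
  refine ⟨_, ⟨conjPsi T φ' b', φ', b', (continuous_conjPsi hT hφ'.continuousOn
    b'.continuous.continuousOn).continuousOn, hφ'.continuousOn, b'.continuous.continuousOn,
    dualFeasible_conjPsi S hT hφ'.continuousOn b'.continuous.continuousOn, rfl⟩, ?_⟩
  linarith [h'.integral_conjPsi_le hS hνS hT ⟨t₀, ht₀⟩ hψ hφ'.continuousOn
    b'.continuous.continuousOn]

theorem sInf_continuousDualValues_eq (hS : IsCompact S) (hSne : S.Nonempty)
    (hνS : ∀ᵐ z ∂ν, z ∈ S) (hT : IsCompact T) (hTne : T.Nonempty) (hμT : ∀ᵐ t ∂μ, t ∈ T) :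
    sInf (continuousDualValues ν μ S T) = sInf (integrableDualValues ν μ S T) := by
  refine Real.sInf_eq_of_forall_exists_le_add
    (fun _ hr => exists_mem_integrableDualValues_le hS hνS hT hTne hμT hr) ?_
  rintro _ ⟨φ, b, hφ, hb, hψ, h, rfl⟩ ε hε
  exact h.exists_mem_continuousDualValues_le_add hS hSne hνS hT hTne hμT hψ hφ hb hε

end Values

theorem dual_value_continuous_eq_integrable_general
    {Ωs : Type*} [MeasurableSpace Ωs] (P : Measure Ωs) [IsProbabilityMeasure P]
    {N d : ℕ}
    (X : Ωs → EuclideanSpace ℝ (Fin N)) (Y : Ωs → EuclideanSpace ℝ (Fin d))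
    (hX : Measurable X) (hY : Measurable Y)
    (hXbdd : ∃ C : ℝ, ∀ ω, ‖X ω‖ ≤ C) (hYbdd : ∃ C : ℝ, ∀ ω, ‖Y ω‖ ≤ C)
    -- the cube [0,1]^d and the uniform measure μ on it
    (cube : Set (EuclideanSpace ℝ (Fin d)))
    (hcube : cube = {u : EuclideanSpace ℝ (Fin d) | ∀ i, u i ∈ Icc (0:ℝ) 1})
    (μ : Measure (EuclideanSpace ℝ (Fin d))) (hμ : μ = volume.restrict cube)
    -- ν = Law(X,Y)
    (ν : Measure (EuclideanSpace ℝ (Fin N) × EuclideanSpace ℝ (Fin d)))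
    (hν : ν = Measure.map (fun ω => (X ω, Y ω)) P)
    -- the sup-form potential ψ associated with (φ, b)
    (ψsup : (EuclideanSpace ℝ (Fin d) → ℝ) → (EuclideanSpace ℝ (Fin d) → EuclideanSpace ℝ (Fin N))
      → EuclideanSpace ℝ (Fin N) × EuclideanSpace ℝ (Fin d) → ℝ)
    (hψsup : ∀ φ b z, ψsup φ b z = sSup ((fun t => ⟪t, z.2⟫ - φ t - ⟪b t, z.1⟫) '' cube)) :
    sInf {r : ℝ |
      ∃ (ψ : EuclideanSpace ℝ (Fin N) × EuclideanSpace ℝ (Fin d) → ℝ)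
        (φ : EuclideanSpace ℝ (Fin d) → ℝ)
        (b : EuclideanSpace ℝ (Fin d) → EuclideanSpace ℝ (Fin N)),
        ContinuousOn ψ (measSupport ν) ∧ ContinuousOn φ cube ∧ ContinuousOn b cube ∧
        (∀ z ∈ measSupport ν, ∀ t ∈ cube, ψ z + φ t + ⟪b t, z.1⟫ ≥ ⟪t, z.2⟫) ∧
        r = ∫ z, ψ z ∂ν + ∫ t, φ t ∂μ} =
    sInf {r : ℝ |
      ∃ (φ : EuclideanSpace ℝ (Fin d) → ℝ)
        (b : EuclideanSpace ℝ (Fin d) → EuclideanSpace ℝ (Fin N)),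
        Integrable φ μ ∧ Integrable b μ ∧ Integrable (ψsup φ b) ν ∧
        (∀ z ∈ measSupport ν, ∀ t ∈ cube, ψsup φ b z + φ t + ⟪b t, z.1⟫ ≥ ⟪t, z.2⟫) ∧
        r = ∫ z, ψsup φ b z ∂ν + ∫ t, φ t ∂μ} := by
  obtain rfl : ψsup = conjPsi cube := by
    funext φ b z
    exact hψsup φ b z
  obtain ⟨Cx, hCx⟩ := hXbdd
  obtain ⟨Cy, hCy⟩ := hYbdd
  have hXY : Measurable fun ω => (X ω, Y ω) := hX.prodMk hY
  have : IsProbabilityMeasure ν := hν ▸ Measure.isProbabilityMeasure_map hXY.aemeasurable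
  set K := Metric.closedBall (0 : EuclideanSpace ℝ (Fin N)) Cx ×ˢ
    Metric.closedBall (0 : EuclideanSpace ℝ (Fin d)) Cy
  have hK : IsCompact K := (isCompact_closedBall _ _).prod (isCompact_closedBall _ _)
  have hνK : ∀ᵐ z ∂ν, z ∈ K := by
    rw [hν]
    exact (ae_map_iff hXY.aemeasurable hK.isClosed.measurableSet).2 <|
      ae_of_all _ fun ω => ⟨mem_closedBall_zero_iff.2 (hCx ω), mem_closedBall_zero_iff.2 (hCy ω)⟩
  have hcubeC : IsCompact cube :=
    hcube ▸ EuclideanSpace.isCompact_setOf_forall_mem fun _ => isCompact_Icc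
  have : IsFiniteMeasure μ := hμ ▸ isFiniteMeasure_restrict.2 hcubeC.measure_lt_top.ne
  rw [measSupport_eq_support]
  exact sInf_continuousDualValues_eq
    (Measure.isCompact_support_of_ae_mem hK hνK)
    (Measure.nonempty_support (IsProbabilityMeasure.ne_zero ν)) Measure.support_mem_ae hcubeC
    ⟨0, by simp [hcube]⟩ (hμ ▸ ae_restrict_mem hcubeC.measurableSet)

/-- The infimum of the dual problem (D) over continuous triples `(ψ, φ, b)`
satisfying the pointwise constraint coincides with the infimum over integrable `(φ, b)` with
`ψ(x,y) := sup_{t ∈ [0,1]^d} { t·y − φ(t) − b(t)·x }` satisfying the same constraint; in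
particular the value of (D) equals the infimum over `(φ, b)` of
`∫ sup_t { t·y − φ(t) − b(t)·x } ν(dx,dy) + ∫ φ dμ`. -/
theorem dual_value_continuous_eq_integrable
    {Ωs : Type*} [MeasurableSpace Ωs] (P : Measure Ωs) [IsProbabilityMeasure P]
    {N d : ℕ}
    (X : Ωs → EuclideanSpace ℝ (Fin N)) (Y : Ωs → EuclideanSpace ℝ (Fin d))
    (hX : Measurable X) (hY : Measurable Y)
    (hXbdd : ∃ C : ℝ, ∀ ω, ‖X ω‖ ≤ C) (hYbdd : ∃ C : ℝ, ∀ ω, ‖Y ω‖ ≤ C)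
    (hXcentered : ∫ ω, X ω ∂P = 0)
    -- the cube [0,1]^d and the uniform measure μ on it
    (cube : Set (EuclideanSpace ℝ (Fin d)))
    (hcube : cube = {u : EuclideanSpace ℝ (Fin d) | ∀ i, u i ∈ Icc (0:ℝ) 1})
    (μ : Measure (EuclideanSpace ℝ (Fin d))) (hμ : μ = volume.restrict cube)
    -- ν = Law(X,Y)
    (ν : Measure (EuclideanSpace ℝ (Fin N) × EuclideanSpace ℝ (Fin d)))
    (hν : ν = Measure.map (fun ω => (X ω, Y ω)) P)
    -- the sup-form potential ψ associated with (φ, b)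
    (ψsup : (EuclideanSpace ℝ (Fin d) → ℝ) → (EuclideanSpace ℝ (Fin d) → EuclideanSpace ℝ (Fin N))
      → EuclideanSpace ℝ (Fin N) × EuclideanSpace ℝ (Fin d) → ℝ)
    (hψsup : ∀ φ b z, ψsup φ b z = sSup ((fun t => ⟪t, z.2⟫ - φ t - ⟪b t, z.1⟫) '' cube)) :
    sInf {r : ℝ |
      ∃ (ψ : EuclideanSpace ℝ (Fin N) × EuclideanSpace ℝ (Fin d) → ℝ)
        (φ : EuclideanSpace ℝ (Fin d) → ℝ)
        (b : EuclideanSpace ℝ (Fin d) → EuclideanSpace ℝ (Fin N)),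
        ContinuousOn ψ (measSupport ν) ∧ ContinuousOn φ cube ∧ ContinuousOn b cube ∧
        (∀ z ∈ measSupport ν, ∀ t ∈ cube, ψ z + φ t + ⟪b t, z.1⟫ ≥ ⟪t, z.2⟫) ∧
        r = ∫ z, ψ z ∂ν + ∫ t, φ t ∂μ} =
    sInf {r : ℝ |
      ∃ (φ : EuclideanSpace ℝ (Fin d) → ℝ)
        (b : EuclideanSpace ℝ (Fin d) → EuclideanSpace ℝ (Fin N)),
        Integrable φ μ ∧ Integrable b μ ∧ Integrable (ψsup φ b) ν ∧
        (∀ z ∈ measSupport ν, ∀ t ∈ cube, ψsup φ b z + φ t + ⟪b t, z.1⟫ ≥ ⟪t, z.2⟫) ∧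
        r = ∫ z, ψsup φ b z ∂ν + ∫ t, φ t ∂μ} :=
  dual_value_continuous_eq_integrable_general P X Y hX hY hXbdd hYbdd cube hcube μ hμ ν hν ψsup
    hψsup
end
end

section
/- Assume quantile regression is under quasi-specification with coefficients (α^QR,β^QR). Set U_t^QR := 1_{{Y > α^QR(t)+β^QR(t)·X}} and U^QR := ∫₀¹ U_t^QR dt. Then: (i) U^QR is uniformly distributed on [0,1]; (ii) X is mean-independent of U^QR, i.e. 𝔼(X|U^QR) = 𝔼(X) = 0; (iii) Y = α^QR(U^QR) + β^QR(U^QR)·X almost surely. -/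
open MeasureTheory ProbabilityTheory Set Function
open scoped RealInnerProductSpace

/-!
For almost every `ω`, the map `t ↦ αQR t + ⟪βQR t, X ω⟫` is continuous and strictly increasing
on `[0, 1]`, lies below `Y ω` at `t = 0` and not below it at `t = 1` (the first-order condition at
the endpoints), so it crosses `Y ω` at exactly one point `u`; the set of `t` where it is below
`Y ω` is then `[0, u)`, whence `UQR ω = u`. This is (iii), and it also gives
`{t < UQR} = {αQR t + ⟪βQR t, X⟫ < Y}` a.s. for each `t ∈ [0, 1]`. The first Koenker–Bassett
condition then says `P (t < UQR) = 1 - t`, which is (i); the second says `∫_{t < UQR} X = 0`, and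
since the half-lines `(t, ∞)` form a π-system generating the Borel sets, `∫_{UQR ∈ B} X = 0` for
every Borel `B`, which is (ii).
-/

theorem ContinuousOn.exists_continuous_eqOn_Icc {α β : Type*} [LinearOrder α]
    [TopologicalSpace α] [OrderTopology α] [TopologicalSpace β] {f : α → β} {a b : α}
    (hab : a ≤ b) (hf : ContinuousOn f (Icc a b)) :
    ∃ g : α → β, Continuous g ∧ EqOn g f (Icc a b) :=
  ⟨IccExtend hab ((Icc a b).domRestrict f),
    (continuousOn_iff_continuous_domRestrict.1 hf).Icc_extend',
    fun _ hx => IccExtend_of_mem hab _ hx⟩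

theorem lt_coe_projIcc_iff {α : Type*} [LinearOrder α] {a b u : α} (hab : a ≤ b)
    (hu : u ∈ Ioc a b) (t : α) : (projIcc a b hab t : α) < u ↔ t < u := by
  simp [coe_projIcc, hu.1, hu.2.not_gt]

noncomputable def timeBelow (g : ℝ → ℝ) (y : ℝ) : ℝ :=
  ∫ t in (0 : ℝ)..1, if g t < y then 1 else 0

theorem timeBelow_apply_eq_of_strictMonoOn {g : ℝ → ℝ} {u : ℝ}
    (hg : StrictMonoOn g (Icc 0 1)) (hu : u ∈ Icc (0 : ℝ) 1) : timeBelow g (g u) = u := by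
  have hind : EqOn (fun t => if g t < g u then (1 : ℝ) else 0) ((Iio u).indicator 1)
      (uIcc 0 1) := by
    intro t ht
    rw [uIcc_of_le zero_le_one] at ht
    simp [indicator_apply, hg.lt_iff_lt ht hu]
  rw [timeBelow, intervalIntegral.integral_congr hind, intervalIntegral.integral_of_le zero_le_one,
    setIntegral_indicator measurableSet_Iio]
  have hIoo : Ioc 0 1 ∩ Iio u = Ioo 0 u := by
    ext t
    simp only [mem_inter_iff, mem_Ioc, mem_Iio, mem_Ioo]
    constructor <;> intro <;> grind [hu.2]
  simp [hIoo, hu.1]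

theorem timeBelow_mem_Icc_and_apply_eq {g : ℝ → ℝ} {y : ℝ} (hc : ContinuousOn g (Icc 0 1))
    (hg : StrictMonoOn g (Icc 0 1)) (h0 : g 0 < y) (h1 : y ≤ g 1) :
    timeBelow g y ∈ Icc 0 1 ∧ g (timeBelow g y) = y := by
  obtain ⟨u, hu, rfl⟩ := intermediate_value_Icc zero_le_one hc ⟨h0.le, h1⟩
  rw [timeBelow_apply_eq_of_strictMonoOn hg hu]
  exact ⟨hu, rfl⟩

theorem lt_timeBelow_iff {g : ℝ → ℝ} {y t : ℝ} (hc : ContinuousOn g (Icc 0 1))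
    (hg : StrictMonoOn g (Icc 0 1)) (h0 : g 0 < y) (h1 : y ≤ g 1) (ht : t ∈ Icc 0 1) :
    t < timeBelow g y ↔ g t < y := by
  obtain ⟨hmem, happ⟩ := timeBelow_mem_Icc_and_apply_eq hc hg h0 h1
  conv_rhs => rw [← happ]
  exact (hg.lt_iff_lt ht hmem).symm

theorem MeasureTheory.StronglyMeasurable.intervalIntegral_prod_right {α E : Type*}
    [MeasurableSpace α] [NormedAddCommGroup E] [NormedSpace ℝ E] {f : α → ℝ → E}
    (hf : StronglyMeasurable (uncurry f)) (a b : ℝ) :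
    StronglyMeasurable fun x => ∫ t in a..b, f x t :=
  (hf.integral_prod_right' (ν := volume.restrict (Ioc a b))).sub
    (hf.integral_prod_right' (ν := volume.restrict (Ioc b a)))

theorem measurable_timeBelow_affine {Ω E : Type*} [MeasurableSpace Ω]
    [NormedAddCommGroup E] [InnerProductSpace ℝ E] [MeasurableSpace E] [BorelSpace E]
    [SecondCountableTopology E] {X : Ω → E} {Y : Ω → ℝ} (hX : Measurable X) (hY : Measurable Y)
    {α : ℝ → ℝ} {β : ℝ → E} (hα : ContinuousOn α (Icc 0 1)) (hβ : ContinuousOn β (Icc 0 1)) :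
    Measurable fun ω => timeBelow (fun t => α t + ⟪β t, X ω⟫) (Y ω) := by
  obtain ⟨α', hα'c, hα'⟩ := hα.exists_continuous_eqOn_Icc zero_le_one
  obtain ⟨β', hβ'c, hβ'⟩ := hβ.exists_continuous_eqOn_Icc zero_le_one
  have hext : ∀ ω, timeBelow (fun t => α t + ⟪β t, X ω⟫) (Y ω) =
      timeBelow (fun t => α' t + ⟪β' t, X ω⟫) (Y ω) := fun ω =>
    intervalIntegral.integral_congr fun t ht => by
      rw [uIcc_of_le zero_le_one] at ht
      simp only [hα' ht, hβ' ht]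
  simp only [hext]
  refine (StronglyMeasurable.intervalIntegral_prod_right ?_ 0 1).measurable
  exact (Measurable.ite (measurableSet_lt ((hα'c.measurable.comp measurable_snd).add
    ((hβ'c.measurable.comp measurable_snd).inner (hX.comp measurable_fst)))
    (hY.comp measurable_fst)) measurable_const measurable_const).stronglyMeasurable

theorem MeasureTheory.Measure.ext_of_Ioi {α : Type*} [TopologicalSpace α] {_ : MeasurableSpace α}
    [SecondCountableTopology α] [LinearOrder α] [OrderTopology α] [BorelSpace α]
    (μ ν : Measure α) [IsProbabilityMeasure μ] [IsProbabilityMeasure ν]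
    (h : ∀ a, μ (Ioi a) = ν (Ioi a)) : μ = ν :=
  Measure.ext_of_Iic μ ν fun a => by
    rw [← compl_Ioi, prob_compl_eq_one_sub measurableSet_Ioi,
      prob_compl_eq_one_sub measurableSet_Ioi, h]

section Uniform

variable {Ω : Type*} [MeasurableSpace Ω] {P : Measure Ω} {U : Ω → ℝ}

theorem setOf_lt_ae_eq_projIcc {a b : ℝ} (hab : a ≤ b) (hU : ∀ᵐ ω ∂P, U ω ∈ Ioc a b) (t : ℝ) :
    {ω | t < U ω} =ᵐ[P] {ω | (projIcc a b hab t : ℝ) < U ω} := by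
  filter_upwards [hU] with ω hω
  exact propext (lt_coe_projIcc_iff hab hω t).symm

theorem setIntegral_lt_eq_zero_of_forall_mem_Icc {E : Type*} [NormedAddCommGroup E]
    [NormedSpace ℝ E] {X : Ω → E} (hU : ∀ᵐ ω ∂P, U ω ∈ Ioc 0 1)
    (h : ∀ t ∈ Icc (0 : ℝ) 1, ∫ ω in {ω | t < U ω}, X ω ∂P = 0) (t : ℝ) :
    ∫ ω in {ω | t < U ω}, X ω ∂P = 0 := by
  rw [setIntegral_congr_set (setOf_lt_ae_eq_projIcc zero_le_one hU t)]
  exact h _ (projIcc 0 1 _ t).2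

variable [IsProbabilityMeasure P]

theorem ae_mem_and_ae_notMem_of_measure_eq_ofReal_one_sub {S : ℝ → Set Ω}
    (hS : MeasurableSet (S 0)) (h : ∀ t ∈ Icc (0 : ℝ) 1, P (S t) = ENNReal.ofReal (1 - t)) :
    (∀ᵐ ω ∂P, ω ∈ S 0) ∧ ∀ᵐ ω ∂P, ω ∉ S 1 :=
  ⟨(ae_mem_iff_measure_eq hS.nullMeasurableSet).2 (by simp [h 0 (by simp)]),
    measure_eq_zero_iff_ae_notMem.1 (by simp [h 1 (by simp)])⟩

theorem ae_mem_Ioc_of_measure_lt (hU : Measurable U)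
    (h : ∀ t ∈ Icc (0 : ℝ) 1, P {ω | t < U ω} = ENNReal.ofReal (1 - t)) :
    ∀ᵐ ω ∂P, U ω ∈ Ioc 0 1 := by
  obtain ⟨hpos, hle⟩ := ae_mem_and_ae_notMem_of_measure_eq_ofReal_one_sub
    (S := fun t => {ω | t < U ω}) (measurableSet_lt measurable_const hU) h
  filter_upwards [hpos, hle] with ω hpos hle using ⟨hpos, not_lt.1 hle⟩

theorem measure_lt_eq_ofReal_one_sub_projIcc (hU : Measurable U)
    (h : ∀ t ∈ Icc (0 : ℝ) 1, P {ω | t < U ω} = ENNReal.ofReal (1 - t)) (t : ℝ) :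
    P {ω | t < U ω} = ENNReal.ofReal (1 - projIcc 0 1 zero_le_one t) :=
  (measure_congr (setOf_lt_ae_eq_projIcc _ (ae_mem_Ioc_of_measure_lt hU h) t)).trans
    (h _ (projIcc 0 1 _ t).2)

theorem map_eq_volume_restrict_Icc_of_measure_lt (hU : Measurable U)
    (h : ∀ t ∈ Icc (0 : ℝ) 1, P {ω | t < U ω} = ENNReal.ofReal (1 - t)) :
    P.map U = volume.restrict (Icc 0 1) := by
  have : IsProbabilityMeasure (P.map U) := Measure.isProbabilityMeasure_map hU.aemeasurable
  have : IsProbabilityMeasure (volume.restrict (Icc (0 : ℝ) 1)) := ⟨by simp⟩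
  have hvol : ∀ t ∈ Icc (0 : ℝ) 1,
      volume.restrict (Icc 0 1) {x | t < id x} = ENNReal.ofReal (1 - t) := by
    intro t ht
    have : Ioi t ∩ Icc 0 1 = Ioc t 1 := by
      ext x
      simp only [mem_inter_iff, mem_Ioi, mem_Icc, mem_Ioc]
      constructor <;> intro <;> grind [ht.1]
    change volume.restrict (Icc 0 1) (Ioi t) = _
    rw [Measure.restrict_apply measurableSet_Ioi, this, Real.volume_Ioc]
  refine Measure.ext_of_Ioi _ _ fun t => ?_
  rw [Measure.map_apply hU measurableSet_Ioi]
  exact (measure_lt_eq_ofReal_one_sub_projIcc hU h t).trans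
    (measure_lt_eq_ofReal_one_sub_projIcc measurable_id hvol t).symm

end Uniform

theorem condExp_comap_eq_zero_of_setIntegral_lt {Ω E : Type*} [MeasurableSpace Ω]
    {P : Measure Ω} [IsFiniteMeasure P] [NormedAddCommGroup E] [NormedSpace ℝ E] [CompleteSpace E]
    {U : Ω → ℝ} {X : Ω → E} (hU : Measurable U) (hX : Integrable X P)
    (hX0 : ∫ ω, X ω ∂P = 0) (h : ∀ t, ∫ ω in {ω | t < U ω}, X ω ∂P = 0) :
    P[X | MeasurableSpace.comap U inferInstance] =ᵐ[P] 0 := by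
  have hpre : ∀ B : Set ℝ, MeasurableSet B → ∫ ω in U ⁻¹' B, X ω ∂P = 0 := by
    refine MeasurableSpace.induction_on_inter
      (BorelSpace.measurable_eq.trans (borel_eq_generateFrom_Ioi ℝ)) isPiSystem_Ioi
      (by simp) (by rintro _ ⟨t, rfl⟩; exact h t) (fun B hB hB0 => ?_) (fun B hdisj hB hB0 => ?_)
    · have := integral_add_compl (hU hB) hX
      rwa [hB0, zero_add, hX0, ← preimage_compl] at this
    · rw [preimage_iUnion, integral_iUnion (fun i => hU (hB i))
        (hdisj.mono fun _ _ h => h.preimage _) hX.integrableOn]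
      simp [hB0]
  refine (ae_eq_condExp_of_forall_setIntegral_eq hU.comap_le hX
    (fun _ _ _ => integrableOn_zero) ?_ stronglyMeasurable_zero.aestronglyMeasurable).symm
  rintro _ ⟨B, hB, rfl⟩ _
  simp [hpre B hB]

theorem quasi_specification_factorization_general
    {Ωs : Type*} [MeasurableSpace Ωs] (P : Measure Ωs) [IsProbabilityMeasure P]
    {N : ℕ}
    (X : Ωs → EuclideanSpace ℝ (Fin N)) (Y : Ωs → ℝ)
    (hX : Measurable X) (hY : Measurable Y)
    (hXbdd : ∃ C : ℝ, ∀ ω, ‖X ω‖ ≤ C)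
    (hXcentered : ∫ ω, X ω ∂P = 0)
    (m : Measure (EuclideanSpace ℝ (Fin N))) (hm : m = Measure.map X P)
    -- quasi-specification: continuous coefficients satisfying the Koenker-Bassett
    -- first-order conditions, with the monotonicity property
    (αQR : ℝ → ℝ) (βQR : ℝ → EuclideanSpace ℝ (Fin N))
    (hαcont : ContinuousOn αQR (Icc 0 1)) (hβcont : ContinuousOn βQR (Icc 0 1))
    (hfoc1 : ∀ t ∈ Icc (0:ℝ) 1,
      P {ω | αQR t + ⟪βQR t, X ω⟫ < Y ω} = ENNReal.ofReal (1 - t))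
    (hfoc2 : ∀ t ∈ Icc (0:ℝ) 1,
      ∫ ω in {ω | αQR t + ⟪βQR t, X ω⟫ < Y ω}, X ω ∂P = 0)
    (hmono : ∀ᵐ x ∂m, StrictMonoOn (fun t => αQR t + ⟪βQR t, x⟫) (Icc (0:ℝ) 1))
    -- U^QR := ∫₀¹ 1_{Y > αQR(t) + ⟪βQR(t), X⟫} dt
    (UQR : Ωs → ℝ)
    (hUQR : ∀ ω, UQR ω = ∫ t in (0:ℝ)..1,
      if αQR t + ⟪βQR t, X ω⟫ < Y ω then (1:ℝ) else 0) :
    Measure.map UQR P = volume.restrict (Icc (0:ℝ) 1) ∧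
    P[X | MeasurableSpace.comap UQR inferInstance] =ᵐ[P] 0 ∧
    ∀ᵐ ω ∂P, Y ω = αQR (UQR ω) + ⟪βQR (UQR ω), X ω⟫ := by
  replace hUQR : UQR = fun ω => timeBelow (fun t => αQR t + ⟪βQR t, X ω⟫) (Y ω) := funext hUQR
  have hU : Measurable UQR := hUQR ▸ measurable_timeBelow_affine hX hY hαcont hβcont
  have hc : ∀ ω, ContinuousOn (fun t => αQR t + ⟪βQR t, X ω⟫) (Icc 0 1) := fun _ =>
    hαcont.add (hβcont.inner continuousOn_const)
  obtain ⟨h0, h1⟩ := ae_mem_and_ae_notMem_of_measure_eq_ofReal_one_sub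
    (measurableSet_lt (measurable_const.add (measurable_const.inner hX)) hY) hfoc1
  have hreg : ∀ᵐ ω ∂P, StrictMonoOn (fun t => αQR t + ⟪βQR t, X ω⟫) (Icc 0 1) ∧
      αQR 0 + ⟪βQR 0, X ω⟫ < Y ω ∧ Y ω ≤ αQR 1 + ⟪βQR 1, X ω⟫ := by
    filter_upwards [ae_of_ae_map hX.aemeasurable (hm ▸ hmono), h0, h1] with ω hmono h0 h1
    exact ⟨hmono, h0, not_lt.1 h1⟩
  have hlt : ∀ t ∈ Icc (0 : ℝ) 1,
      {ω | t < UQR ω} =ᵐ[P] {ω | αQR t + ⟪βQR t, X ω⟫ < Y ω} := fun t ht => by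
    refine Filter.eventuallyEq_set.2 ?_
    filter_upwards [hreg] with ω ⟨hmono, h0, h1⟩
    rw [hUQR]
    exact lt_timeBelow_iff (hc ω) hmono h0 h1 ht
  have hlaw : ∀ t ∈ Icc (0 : ℝ) 1, P {ω | t < UQR ω} = ENNReal.ofReal (1 - t) :=
    fun t ht => (measure_congr (hlt t ht)).trans (hfoc1 t ht)
  obtain ⟨C, hC⟩ := hXbdd
  refine ⟨map_eq_volume_restrict_Icc_of_measure_lt hU hlaw,
    condExp_comap_eq_zero_of_setIntegral_lt hU
      (Integrable.of_bound hX.aestronglyMeasurable C (.of_forall hC)) hXcentered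
      (setIntegral_lt_eq_zero_of_forall_mem_Icc (ae_mem_Ioc_of_measure_lt hU hlaw)
        fun t ht => (setIntegral_congr_set (hlt t ht)).trans (hfoc2 t ht)), ?_⟩
  filter_upwards [hreg] with ω ⟨hmono, h0, h1⟩
  rw [hUQR]
  exact (timeBelow_mem_Icc_and_apply_eq (hc ω) hmono h0 h1).2.symm

/-- **consequences of quasi-specification.** Assume quantile regression is under
quasi-specification with coefficients `(αQR, βQR)`. Set `U_t := 1_{Y > αQR(t) + ⟪βQR(t), X⟫}`
and `U := ∫₀¹ U_t dt`. Then `U` is uniformly distributed on `[0,1]`, `X` is mean-independent of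
`U` (`𝔼(X|U) = 𝔼(X) = 0`), and `Y = αQR(U) + ⟪βQR(U), X⟫` almost surely. -/
theorem quasi_specification_factorization
    {Ωs : Type*} [MeasurableSpace Ωs] (P : Measure Ωs) [IsProbabilityMeasure P]
    {N : ℕ}
    (X : Ωs → EuclideanSpace ℝ (Fin N)) (Y : Ωs → ℝ)
    (hX : Measurable X) (hY : Measurable Y)
    (hXbdd : ∃ C : ℝ, ∀ ω, ‖X ω‖ ≤ C) (hYbdd : ∃ C : ℝ, ∀ ω, |Y ω| ≤ C)
    (hXcentered : ∫ ω, X ω ∂P = 0)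
    -- m = Law(X) is nondegenerate: its support contains a ball centered at 0
    (m : Measure (EuclideanSpace ℝ (Fin N))) (hm : m = Measure.map X P)
    (hnondeg : ∃ r > (0:ℝ), ∀ x ∈ Metric.ball (0 : EuclideanSpace ℝ (Fin N)) r,
      ∀ s ∈ nhds x, 0 < m s)
    -- F is the conditional cdf of Y given X, Q the conditional quantile
    (F : EuclideanSpace ℝ (Fin N) → ℝ → ℝ)
    (hFmeas : Measurable (Function.uncurry F))
    (hF : ∀ y : ℝ, (fun ω => F (X ω) y) =ᵐ[P]
      P[{ω | Y ω ≤ y}.indicator (fun _ => (1:ℝ)) | MeasurableSpace.comap X inferInstance])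
    (Q : EuclideanSpace ℝ (Fin N) → ℝ → ℝ)
    (hQ : ∀ x t, Q x t = sInf {α : ℝ | F x α > t})
    (hQreg : ∀ᵐ x ∂m, ContinuousOn (Q x) (Icc 0 1) ∧ StrictMonoOn (Q x) (Icc 0 1))
    -- Law(X,Y) charges no nonvertical hyperplane
    (hNoHyper : ∀ (a : ℝ) (β : EuclideanSpace ℝ (Fin N)),
      P {ω | Y ω = a + ⟪β, X ω⟫} = 0)
    -- quasi-specification: continuous coefficients satisfying the Koenker-Bassett
    -- first-order conditions, with the monotonicity property
    (αQR : ℝ → ℝ) (βQR : ℝ → EuclideanSpace ℝ (Fin N))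
    (hαcont : ContinuousOn αQR (Icc 0 1)) (hβcont : ContinuousOn βQR (Icc 0 1))
    (hfoc1 : ∀ t ∈ Icc (0:ℝ) 1,
      P {ω | αQR t + ⟪βQR t, X ω⟫ < Y ω} = ENNReal.ofReal (1 - t))
    (hfoc2 : ∀ t ∈ Icc (0:ℝ) 1,
      ∫ ω in {ω | αQR t + ⟪βQR t, X ω⟫ < Y ω}, X ω ∂P = 0)
    (hmono : ∀ᵐ x ∂m, StrictMonoOn (fun t => αQR t + ⟪βQR t, x⟫) (Icc (0:ℝ) 1))
    -- U^QR := ∫₀¹ 1_{Y > αQR(t) + ⟪βQR(t), X⟫} dt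
    (UQR : Ωs → ℝ)
    (hUQR : ∀ ω, UQR ω = ∫ t in (0:ℝ)..1,
      if αQR t + ⟪βQR t, X ω⟫ < Y ω then (1:ℝ) else 0) :
    Measure.map UQR P = volume.restrict (Icc (0:ℝ) 1) ∧
    P[X | MeasurableSpace.comap UQR inferInstance] =ᵐ[P] 0 ∧
    ∀ᵐ ω ∂P, Y ω = αQR (UQR ω) + ⟪βQR (UQR ω), X ω⟫ :=
  quasi_specification_factorization_general P X Y hX hY hXbdd hXcentered m hm αQR βQR hαcont hβcont
    hfoc1 hfoc2 hmono UQR hUQR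
end

section
/- Assume quantile regression is under quasi-specification with coefficients (α^QR,β^QR), and set U^QR := ∫₀¹ 1_{{Y > α^QR(t)+β^QR(t)·X}} dt. Then U^QR solves the correlation maximization problem with mean-independence constraint: for every random variable V uniformly distributed on [0,1] with 𝔼(X|V)=0, one has 𝔼(V·Y) ≤ 𝔼(U^QR·Y). -/
open MeasureTheory Set
open scoped RealInnerProductSpace

/-!
Write `g t ω = α(t) + ⟪β(t), X ω⟫` and call a family of events `S_t` *feasible* if
`P(S_t) = 1 - t` and `𝔼[X; S_t] = 0` for `t ∈ [0,1]`. For a feasible family, Fubini gives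
`𝔼 ∫₀¹ 1_{S_t} g_t dt = ∫₀¹ α(t)(1 - t) dt =: c`. Both `{t < V}` (uniformity and mean
independence of `V`) and `{g_t < Y}` (the Koenker–Bassett conditions) are feasible, and
`V Y = ∫₀¹ 1_{t < V} Y dt`, `U^QR Y = ∫₀¹ 1_{g_t < Y} Y dt`. Since
`1_{t < V} (Y - g_t) ≤ (Y - g_t)⁺ = 1_{g_t < Y} (Y - g_t)` pointwise, integrating over
`Ω × [0,1]` yields `𝔼[V Y] - c ≤ 𝔼[U^QR Y] - c`.
-/

local notation "𝕀" => volume.restrict (Icc (0:ℝ) 1)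

lemma ContinuousOn.exists_continuous_bounded_eqOn_Icc {F : Type*} [NormedAddCommGroup F]
    {f : ℝ → F} {x y : ℝ} (hxy : x ≤ y) (hf : ContinuousOn f (Icc x y)) :
    ∃ f' : ℝ → F, Continuous f' ∧ (∃ C, ∀ t, ‖f' t‖ ≤ C) ∧ EqOn f' f (Icc x y) := by
  obtain ⟨C, hC⟩ := isCompact_Icc.exists_bound_of_continuousOn hf
  exact ⟨IccExtend hxy ((Icc x y).domRestrict f),
    (continuousOn_iff_continuous_domRestrict.mp hf).Icc_extend',
    ⟨C, fun t => hC _ (projIcc x y hxy t).2⟩, fun t ht => IccExtend_of_mem hxy _ ht⟩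

lemma measureReal_restrict_Icc_Iio {v : ℝ} (hv : v ∈ Icc (0:ℝ) 1) : (𝕀).real (Iio v) = v := by
  have hIco : Iio v ∩ Icc 0 1 = Ico 0 v := by
    ext s; simp only [mem_inter_iff, mem_Iio, mem_Icc, mem_Ico]; grind
  rw [Measure.real, Measure.restrict_apply measurableSet_Iio, hIco, Real.volume_Ico, sub_zero,
    ENNReal.toReal_ofReal hv.1]

lemma intervalIntegral_ite_one_eq_measureReal {p : ℝ → Prop} [DecidablePred p]
    (hp : MeasurableSet {t | p t}) :
    ∫ t in (0:ℝ)..1, (if p t then (1:ℝ) else 0) = (𝕀).real {t | p t} := by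
  rw [intervalIntegral.integral_of_le zero_le_one, ← integral_Icc_eq_integral_Ioc,
    ← integral_indicator_one hp]
  simp only [indicator_apply, mem_ofPred_eq, Pi.one_apply]

section Probability

variable {Ω : Type*} [MeasurableSpace Ω] {P : Measure Ω}

lemma measure_lt_of_map_eq_uniform [IsFiniteMeasure P] {V : Ω → ℝ} (hV : Measurable V)
    (hlaw : P.map V = 𝕀) {t : ℝ} (ht : t ∈ Icc (0:ℝ) 1) :
    P {ω | t < V ω} = ENNReal.ofReal (1 - t) := by
  have hIoc : Ioi t ∩ Icc 0 1 = Ioc t 1 := by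
    ext s; simp only [mem_inter_iff, mem_Ioi, mem_Icc, mem_Ioc]; grind
  change P (V ⁻¹' Ioi t) = _
  rw [← Measure.map_apply hV measurableSet_Ioi, hlaw, Measure.restrict_apply measurableSet_Ioi,
    hIoc, Real.volume_Ioc]

lemma ae_mem_Icc_of_map_eq_uniform {V : Ω → ℝ} (hV : Measurable V) (hlaw : P.map V = 𝕀) :
    ∀ᵐ ω ∂P, V ω ∈ Icc (0:ℝ) 1 :=
  ae_of_ae_map hV.aemeasurable (hlaw ▸ ae_restrict_mem measurableSet_Icc)

lemma integral_prod_indicator_comp_fst {β : Type*} [MeasurableSpace β] {ν : Measure β}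
    [IsFiniteMeasure ν] [SFinite P] {S : Set (Ω × β)} (hS : MeasurableSet S) {Y : Ω → ℝ}
    (hY : Integrable Y P) :
    ∫ p, S.indicator (fun p => Y p.1) p ∂(P.prod ν) = ∫ ω, ν.real {t | (ω, t) ∈ S} * Y ω ∂P := by
  rw [integral_prod _ ((hY.comp_fst ν).indicator hS)]
  refine integral_congr_ae (ae_of_all _ fun ω => ?_)
  dsimp only
  rw [← smul_eq_mul]
  exact integral_indicator_const (Y ω) (measurable_prodMk_left hS)

variable {E : Type*} [NormedAddCommGroup E] [InnerProductSpace ℝ E]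

lemma integrable_add_inner_of_bounded [MeasurableSpace E] [BorelSpace E]
    [SecondCountableTopology E] {β : Type*} [MeasurableSpace β] {μ : Measure (Ω × β)}
    [IsFiniteMeasure μ] {X : Ω → E} {a : β → ℝ} {b : β → E} (hX : Measurable X)
    (ha : Measurable a) (hb : Measurable b) {Cx Ca Cb : ℝ} (hCx : ∀ ω, ‖X ω‖ ≤ Cx)
    (hCa : ∀ t, ‖a t‖ ≤ Ca) (hCb : ∀ t, ‖b t‖ ≤ Cb) :
    Integrable (fun p : Ω × β => a p.2 + ⟪b p.2, X p.1⟫) μ := by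
  refine .of_bound ((ha.comp measurable_snd).add ((hb.comp measurable_snd).inner
    (hX.comp measurable_fst))).aestronglyMeasurable (Ca + Cb * Cx) (ae_of_all _ fun p => ?_)
  calc ‖a p.2 + ⟪b p.2, X p.1⟫‖ ≤ ‖a p.2‖ + ‖b p.2‖ * ‖X p.1‖ :=
        (norm_add_le _ _).trans (by gcongr; exact norm_inner_le_norm _ _)
    _ ≤ Ca + Cb * Cx := by
        gcongr
        exacts [hCa _, (norm_nonneg _).trans (hCb p.2), hCb _, hCx _]

variable [CompleteSpace E]

lemma setIntegral_const_add_inner [IsFiniteMeasure P] {X : Ω → E} (hX : Integrable X P)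
    (s : Set Ω) (c : ℝ) (v : E) :
    ∫ ω in s, (c + ⟪v, X ω⟫) ∂P = c * P.real s + ⟪v, ∫ ω in s, X ω ∂P⟫ := by
  rw [integral_add (integrable_const c) (hX.restrict.const_inner v), setIntegral_const,
    integral_inner hX.restrict, smul_eq_mul, mul_comm]

lemma setIntegral_preimage_eq_zero_of_condExp_ae_eq_zero {β : Type*} [MeasurableSpace β]
    [IsFiniteMeasure P] {X : Ω → E} (hX : Integrable X P) {V : Ω → β} (hV : Measurable V)
    (hcond : P[X | MeasurableSpace.comap V inferInstance] =ᵐ[P] 0) {s : Set β}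
    (hs : MeasurableSet s) :
    ∫ ω in V ⁻¹' s, X ω ∂P = 0 := by
  rw [← setIntegral_condExp hV.comap_le hX ⟨s, hs, rfl⟩,
    integral_congr_ae (ae_restrict_of_ae hcond)]
  simp

lemma integral_prod_indicator_add_inner_eq [IsProbabilityMeasure P] {X : Ω → E} {a : ℝ → ℝ}
    {b : ℝ → E} {S : Set (Ω × ℝ)} (hS : MeasurableSet S) (hX : Integrable X P)
    (hg : Integrable (fun p : Ω × ℝ => a p.2 + ⟪b p.2, X p.1⟫) (P.prod 𝕀))
    (hprob : ∀ t ∈ Icc (0:ℝ) 1, P {ω | (ω, t) ∈ S} = ENNReal.ofReal (1 - t))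
    (hmean : ∀ t ∈ Icc (0:ℝ) 1, ∫ ω in {ω | (ω, t) ∈ S}, X ω ∂P = 0) :
    ∫ p, S.indicator (fun p => a p.2 + ⟪b p.2, X p.1⟫) p ∂(P.prod 𝕀)
      = ∫ t in Icc (0:ℝ) 1, a t * (1 - t) := by
  rw [integral_prod_symm _ (hg.indicator hS)]
  refine setIntegral_congr_fun measurableSet_Icc fun t ht => ?_
  have hSt : MeasurableSet {ω | (ω, t) ∈ S} := measurable_prodMk_right hS
  calc ∫ ω, S.indicator (fun p => a p.2 + ⟪b p.2, X p.1⟫) (ω, t) ∂P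
      = ∫ ω in {ω | (ω, t) ∈ S}, (a t + ⟪b t, X ω⟫) ∂P := by rw [← integral_indicator hSt]; rfl
    _ = a t * (1 - t) := by
      rw [setIntegral_const_add_inner hX, hmean t ht, inner_zero_right, add_zero, Measure.real,
        hprob t ht, ENNReal.toReal_ofReal (sub_nonneg.2 ht.2)]

theorem integral_mul_le_of_koenkerBassett [IsProbabilityMeasure P] [MeasurableSpace E]
    [BorelSpace E] [SecondCountableTopology E] {X : Ω → E} (hXm : Measurable X)
    (hX : Integrable X P) {Y : Ω → ℝ} (hYm : Measurable Y) (hY : Integrable Y P)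
    {a : ℝ → ℝ} {b : ℝ → E} (ha : Measurable a) (hb : Measurable b)
    (hg : Integrable (fun p : Ω × ℝ => a p.2 + ⟪b p.2, X p.1⟫) (P.prod 𝕀))
    (hprob : ∀ t ∈ Icc (0:ℝ) 1, P {ω | a t + ⟪b t, X ω⟫ < Y ω} = ENNReal.ofReal (1 - t))
    (hmean : ∀ t ∈ Icc (0:ℝ) 1, ∫ ω in {ω | a t + ⟪b t, X ω⟫ < Y ω}, X ω ∂P = 0)
    {V : Ω → ℝ} (hV : Measurable V) (hlaw : P.map V = 𝕀)
    (hcond : P[X | MeasurableSpace.comap V inferInstance] =ᵐ[P] 0) :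
    ∫ ω, V ω * Y ω ∂P ≤ ∫ ω, (𝕀).real {t | a t + ⟪b t, X ω⟫ < Y ω} * Y ω ∂P := by
  set g : Ω × ℝ → ℝ := fun p => a p.2 + ⟪b p.2, X p.1⟫
  set SV : Set (Ω × ℝ) := {p | p.2 < V p.1}
  set SU : Set (Ω × ℝ) := {p | g p < Y p.1}
  have hgm : Measurable g :=
    (ha.comp measurable_snd).add ((hb.comp measurable_snd).inner (hXm.comp measurable_fst))
  have hSV : MeasurableSet SV := measurableSet_lt measurable_snd (hV.comp measurable_fst)
  have hSU : MeasurableSet SU := measurableSet_lt hgm (hYm.comp measurable_fst)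
  have hYπ : Integrable (fun p : Ω × ℝ => Y p.1) (P.prod 𝕀) := hY.comp_fst _
  have hgV : ∫ p, SV.indicator g p ∂(P.prod 𝕀) = ∫ t in Icc (0:ℝ) 1, a t * (1 - t) :=
    integral_prod_indicator_add_inner_eq hSV hX hg
      (fun _ => measure_lt_of_map_eq_uniform hV hlaw)
      (fun t _ => setIntegral_preimage_eq_zero_of_condExp_ae_eq_zero hX hV hcond measurableSet_Ioi)
  have hgU : ∫ p, SU.indicator g p ∂(P.prod 𝕀) = ∫ t in Icc (0:ℝ) 1, a t * (1 - t) :=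
    integral_prod_indicator_add_inner_eq hSU hX hg hprob hmean
  have hVY : ∫ ω, V ω * Y ω ∂P = ∫ p, SV.indicator (fun p => Y p.1) p ∂(P.prod 𝕀) := by
    rw [integral_prod_indicator_comp_fst hSV hY]
    refine integral_congr_ae ?_
    filter_upwards [ae_mem_Icc_of_map_eq_uniform hV hlaw] with ω hω
    rw [← measureReal_restrict_Icc_Iio hω]
    rfl
  have hslack : SV.indicator (fun p => Y p.1 - g p) ≤ SU.indicator (fun p => Y p.1 - g p) := by
    intro p
    simp only [indicator_apply]
    split_ifs <;> grind
  have hle := integral_mono ((hYπ.sub hg).indicator hSV) ((hYπ.sub hg).indicator hSU) hslack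
  simp only [indicator_sub', Pi.sub_apply] at hle
  rw [integral_sub (hYπ.indicator hSV) (hg.indicator hSV),
    integral_sub (hYπ.indicator hSU) (hg.indicator hSU), hgV, hgU,
    integral_prod_indicator_comp_fst hSU hY] at hle
  rw [hVY]
  exact (sub_le_sub_iff_right _).1 hle

end Probability

theorem quasi_specification_solves_correlation_maximization_general
    {Ωs : Type*} [MeasurableSpace Ωs] (P : Measure Ωs) [IsProbabilityMeasure P]
    {N : ℕ}
    (X : Ωs → EuclideanSpace ℝ (Fin N)) (Y : Ωs → ℝ)
    (hX : Measurable X) (hY : Measurable Y)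
    (hXbdd : ∃ C : ℝ, ∀ ω, ‖X ω‖ ≤ C) (hYbdd : ∃ C : ℝ, ∀ ω, |Y ω| ≤ C)
    -- quasi-specification: continuous coefficients satisfying the Koenker-Bassett
    -- first-order conditions, with the monotonicity property
    (αQR : ℝ → ℝ) (βQR : ℝ → EuclideanSpace ℝ (Fin N))
    (hαcont : ContinuousOn αQR (Icc 0 1)) (hβcont : ContinuousOn βQR (Icc 0 1))
    (hfoc1 : ∀ t ∈ Icc (0:ℝ) 1,
      P {ω | αQR t + ⟪βQR t, X ω⟫ < Y ω} = ENNReal.ofReal (1 - t))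
    (hfoc2 : ∀ t ∈ Icc (0:ℝ) 1,
      ∫ ω in {ω | αQR t + ⟪βQR t, X ω⟫ < Y ω}, X ω ∂P = 0)
    -- U^QR := ∫₀¹ 1_{Y > αQR(t) + ⟪βQR(t), X⟫} dt
    (UQR : Ωs → ℝ)
    (hUQR : ∀ ω, UQR ω = ∫ t in (0:ℝ)..1,
      if αQR t + ⟪βQR t, X ω⟫ < Y ω then (1:ℝ) else 0) :
    ∀ V : Ωs → ℝ, Measurable V →
      Measure.map V P = volume.restrict (Icc (0:ℝ) 1) →
      P[X | MeasurableSpace.comap V inferInstance] =ᵐ[P] 0 →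
      ∫ ω, V ω * Y ω ∂P ≤ ∫ ω, UQR ω * Y ω ∂P := by
  intro V hV hlaw hcond
  obtain ⟨Cx, hCx⟩ := hXbdd
  obtain ⟨Cy, hCy⟩ := hYbdd
  obtain ⟨a, hac, ⟨Ca, hCa⟩, haα⟩ := hαcont.exists_continuous_bounded_eqOn_Icc zero_le_one
  obtain ⟨b, hbc, ⟨Cb, hCb⟩, hbβ⟩ := hβcont.exists_continuous_bounded_eqOn_Icc zero_le_one
  have hS : ∀ t ∈ Icc (0:ℝ) 1,
      {ω | a t + ⟪b t, X ω⟫ < Y ω} = {ω | αQR t + ⟪βQR t, X ω⟫ < Y ω} := by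
    intro t ht
    rw [haα ht, hbβ ht]
  have hU : ∀ ω, UQR ω = (𝕀).real {t | a t + ⟪b t, X ω⟫ < Y ω} := by
    intro ω
    rw [hUQR, ← intervalIntegral_ite_one_eq_measureReal
      (measurableSet_lt (by fun_prop) measurable_const)]
    refine intervalIntegral.integral_congr fun t ht => ?_
    rw [uIcc_of_le zero_le_one] at ht
    simp only [haα ht, hbβ ht]
  simp only [hU]
  exact integral_mul_le_of_koenkerBassett hX
    (.of_bound hX.aestronglyMeasurable Cx (ae_of_all _ hCx)) hY
    (.of_bound hY.aestronglyMeasurable Cy (ae_of_all _ hCy)) hac.measurable hbc.measurable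
    (integrable_add_inner_of_bounded hX hac.measurable hbc.measurable hCx hCa hCb)
    (fun t ht => hS t ht ▸ hfoc1 t ht) (fun t ht => hS t ht ▸ hfoc2 t ht) hV hlaw hcond

/-- Assume quantile regression is under quasi-specification with coefficients
`(αQR, βQR)` and set `U^QR := ∫₀¹ 1_{Y > αQR(t) + ⟪βQR(t), X⟫} dt`. Then `U^QR` solves the
correlation maximization problem with mean-independence constraint: for every `V` uniformly
distributed on `[0,1]` with `𝔼(X|V) = 0`, one has `𝔼(V·Y) ≤ 𝔼(U^QR·Y)`. -/
theorem quasi_specification_solves_correlation_maximization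
    {Ωs : Type*} [MeasurableSpace Ωs] (P : Measure Ωs) [IsProbabilityMeasure P]
    {N : ℕ}
    (X : Ωs → EuclideanSpace ℝ (Fin N)) (Y : Ωs → ℝ)
    (hX : Measurable X) (hY : Measurable Y)
    (hXbdd : ∃ C : ℝ, ∀ ω, ‖X ω‖ ≤ C) (hYbdd : ∃ C : ℝ, ∀ ω, |Y ω| ≤ C)
    (hXcentered : ∫ ω, X ω ∂P = 0)
    -- m = Law(X) is nondegenerate: its support contains a ball centered at 0
    (m : Measure (EuclideanSpace ℝ (Fin N))) (hm : m = Measure.map X P)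
    (hnondeg : ∃ r > (0:ℝ), ∀ x ∈ Metric.ball (0 : EuclideanSpace ℝ (Fin N)) r,
      ∀ s ∈ nhds x, 0 < m s)
    -- F is the conditional cdf of Y given X, Q the conditional quantile
    (F : EuclideanSpace ℝ (Fin N) → ℝ → ℝ)
    (hFmeas : Measurable (Function.uncurry F))
    (hF : ∀ y : ℝ, (fun ω => F (X ω) y) =ᵐ[P]
      P[{ω | Y ω ≤ y}.indicator (fun _ => (1:ℝ)) | MeasurableSpace.comap X inferInstance])
    (Q : EuclideanSpace ℝ (Fin N) → ℝ → ℝ)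
    (hQ : ∀ x t, Q x t = sInf {α : ℝ | F x α > t})
    (hQreg : ∀ᵐ x ∂m, ContinuousOn (Q x) (Icc 0 1) ∧ StrictMonoOn (Q x) (Icc 0 1))
    -- Law(X,Y) charges no nonvertical hyperplane
    (hNoHyper : ∀ (a : ℝ) (β : EuclideanSpace ℝ (Fin N)),
      P {ω | Y ω = a + ⟪β, X ω⟫} = 0)
    -- quasi-specification: continuous coefficients satisfying the Koenker-Bassett
    -- first-order conditions, with the monotonicity property
    (αQR : ℝ → ℝ) (βQR : ℝ → EuclideanSpace ℝ (Fin N))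
    (hαcont : ContinuousOn αQR (Icc 0 1)) (hβcont : ContinuousOn βQR (Icc 0 1))
    (hfoc1 : ∀ t ∈ Icc (0:ℝ) 1,
      P {ω | αQR t + ⟪βQR t, X ω⟫ < Y ω} = ENNReal.ofReal (1 - t))
    (hfoc2 : ∀ t ∈ Icc (0:ℝ) 1,
      ∫ ω in {ω | αQR t + ⟪βQR t, X ω⟫ < Y ω}, X ω ∂P = 0)
    (hmono : ∀ᵐ x ∂m, StrictMonoOn (fun t => αQR t + ⟪βQR t, x⟫) (Icc (0:ℝ) 1))
    -- U^QR := ∫₀¹ 1_{Y > αQR(t) + ⟪βQR(t), X⟫} dt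
    (UQR : Ωs → ℝ)
    (hUQR : ∀ ω, UQR ω = ∫ t in (0:ℝ)..1,
      if αQR t + ⟪βQR t, X ω⟫ < Y ω then (1:ℝ) else 0) :
    ∀ V : Ωs → ℝ, Measurable V →
      Measure.map V P = volume.restrict (Icc (0:ℝ) 1) →
      P[X | MeasurableSpace.comap V inferInstance] =ᵐ[P] 0 →
      ∫ ω, V ω * Y ω ∂P ≤ ∫ ω, UQR ω * Y ω ∂P :=
  quasi_specification_solves_correlation_maximization_general P X Y hX hY hXbdd hYbdd αQR βQR hαcont
    hβcont hfoc1 hfoc2 UQR hUQR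
end
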